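/- arXiv:1312.1400 — 8 statements merged into one kernel-verified Lean document; each statement's English description precedes it below -/
import Mathlib

section
/- Let A and B be real symmetric n×n matrices. Then I_≻(A,B) ≠ ∅ (i.e., there exists σ ∈ ℝ with A + σB positive definite) if and only if wᵀAw > 0 for every nonzero vector w with wᵀBw = 0. -/
/-!
Each vector `w` of the unit sphere admits exactly the `σ` of an open half-line
`{σ | wᵀAw + σ wᵀBw > 0}` (all of `ℝ` when `wᵀBw = 0`), and we need a common one.
For `uᵀBu > 0 > vᵀBv`, the plane through `u` and `v` contains two `B`-isotropic vectors
`t u + (uᵀBu) v` with `t` of opposite signs; the positive combination of their `A`-values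
that cancels the cross term gives `(uᵀAu)(vᵀBv) < (vᵀAv)(uᵀBu)`, so no `σ` fails both for
some `u` with `uᵀBu ≥ 0` and for some `v` with `vᵀBv ≤ 0`. By compactness of the sphere,
the `σ` that work for all such `u` (resp. `v`) form a nonempty open set; these two sets cover
`ℝ`, hence meet because `ℝ` is connected.
-/

open Set Matrix

section Compact

variable {X : Type*} [TopologicalSpace X] {K : Set X} {f g : X → ℝ}

theorem isOpen_setOf_forall_pos_add_mul (hK : IsCompact K) (hf : Continuous f)
    (hg : Continuous g) : IsOpen {σ : ℝ | ∀ w ∈ K, 0 < f w + σ * g w} := by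
  have hF : Continuous fun z : ℝ × X => f z.2 + z.1 * g z.2 := by fun_prop
  exact isOpen_iff_mem_nhds.2 fun σ hσ => hK.eventually_forall_of_forall_eventually
    fun w hw => (hF.tendsto (σ, w)).eventually (lt_mem_nhds (hσ w hw))

theorem exists_forall_pos_add_mul_of_nonneg (hK : IsCompact K) (hf : Continuous f)
    (hg : Continuous g) (hg₀ : ∀ w ∈ K, 0 ≤ g w) (hf₀ : ∀ w ∈ K, g w = 0 → 0 < f w) :
    ∃ σ : ℝ, ∀ w ∈ K, 0 < f w + σ * g w := by
  obtain ⟨t, ht⟩ := hK.elim_finite_subcover (fun k : ℕ => {w | 0 < f w + k * g w})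
    (fun k => isOpen_lt continuous_const (by fun_prop)) fun w hw => by
      rcases (hg₀ w hw).eq_or_lt with h | h
      · exact mem_iUnion.2 ⟨0, by simpa using hf₀ w hw h.symm⟩
      · obtain ⟨k, hk⟩ := exists_nat_gt (-f w / g w)
        exact mem_iUnion.2 ⟨k, show 0 < f w + k * g w by linarith [(div_lt_iff₀ h).1 hk]⟩
  refine ⟨(t.sup id : ℕ), fun w hw => ?_⟩
  obtain ⟨k, hk, hwk : 0 < f w + k * g w⟩ := mem_iUnion₂.1 (ht hw)
  have hkt : (k : ℝ) ≤ (t.sup id : ℕ) := Nat.cast_le.2 (Finset.le_sup (f := id) hk)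
  nlinarith [hg₀ w hw]

theorem exists_forall_pos_add_mul (hK : IsCompact K) (hf : Continuous f) (hg : Continuous g)
    (hf₀ : ∀ w ∈ K, g w = 0 → 0 < f w)
    (hfg : ∀ u ∈ K, ∀ v ∈ K, 0 < g u → g v < 0 → f u * g v < f v * g u) :
    ∃ σ : ℝ, ∀ w ∈ K, 0 < f w + σ * g w := by
  set P := K ∩ {w | 0 ≤ g w}
  set N := K ∩ {w | g w ≤ 0}
  have hP : IsCompact P := hK.inter_right (isClosed_le continuous_const hg)
  have hN : IsCompact N := hK.inter_right (isClosed_le hg continuous_const)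
  obtain ⟨σ₁, hσ₁⟩ := exists_forall_pos_add_mul_of_nonneg hP hf hg (fun w hw => hw.2)
    fun w hw => hf₀ w hw.1
  obtain ⟨σ₂, hσ₂⟩ := exists_forall_pos_add_mul_of_nonneg hN hf hg.neg
    (fun w hw => neg_nonneg.2 hw.2) fun w hw h => hf₀ w hw.1 (neg_eq_zero.1 h)
  have hcover : univ ⊆ {σ : ℝ | ∀ w ∈ P, 0 < f w + σ * g w} ∪
      {σ : ℝ | ∀ w ∈ N, 0 < f w + σ * g w} := by
    intro σ _
    by_contra! h
    simp only [mem_union, mem_ofPred_eq, not_or, not_forall, not_lt] at h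
    obtain ⟨⟨u, ⟨huK, hu₀⟩, hu⟩, ⟨v, ⟨hvK, hv₀⟩, hv⟩⟩ := h
    have hgu : 0 < g u :=
      hu₀.lt_of_ne fun h => (hf₀ u huK h.symm).not_ge (by simpa [← h] using hu)
    have hgv : g v < 0 :=
      hv₀.lt_of_ne fun h => (hf₀ v hvK h).not_ge (by simpa [h] using hv)
    nlinarith [hfg u huK v hvK hgu hgv, mul_le_mul_of_nonpos_right hu hgv.le,
      mul_le_mul_of_nonneg_right hv hgu.le]
  obtain ⟨σ, -, hσP, hσN⟩ := isPreconnected_univ _ _ (isOpen_setOf_forall_pos_add_mul hP hf hg)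
    (isOpen_setOf_forall_pos_add_mul hN hf hg) hcover ⟨σ₁, trivial, hσ₁⟩
    ⟨-σ₂, trivial, fun w hw => by simpa using hσ₂ w hw⟩
  exact ⟨σ, fun w hw => (le_total 0 (g w)).elim (fun h => hσP w ⟨hw, h⟩)
    fun h => hσN w ⟨hw, h⟩⟩

end Compact

theorem mul_lt_mul_of_pos_at_roots {a c p q x y : ℝ} (ha : 0 < a) (hc : c < 0)
    (h : ∀ t : ℝ, t ^ 2 + p * t + a * c = 0 → 0 < t ^ 2 * x + a ^ 2 * y + t * a * q) :
    x * c < y * a := by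
  have hdisc : 0 < p ^ 2 - 4 * (a * c) := by nlinarith [sq_nonneg p, mul_neg_of_pos_of_neg ha hc]
  set s := √(p ^ 2 - 4 * (a * c))
  have hs : 0 < s := Real.sqrt_pos.2 hdisc
  have hs2 : s ^ 2 = p ^ 2 - 4 * (a * c) := Real.sq_sqrt hdisc.le
  set t₁ := (-p - s) / 2
  set t₂ := (-p + s) / 2
  have h₁ := h t₁ (by linear_combination (1 / 4 : ℝ) * hs2)
  have h₂ := h t₂ (by linear_combination (1 / 4 : ℝ) * hs2)
  have hprod : t₁ * t₂ = a * c := by linear_combination (-1 / 4 : ℝ) * hs2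
  have hdiff : t₂ - t₁ = s := by ring
  have hneg : t₁ * t₂ < 0 := hprod ▸ mul_neg_of_pos_of_neg ha hc
  have ht₁ : t₁ < 0 := by nlinarith
  have ht₂ : 0 < t₂ := by nlinarith
  -- the weights `t₂` and `-t₁` (both positive) cancel the cross term `q`
  have hcancel : t₂ * (t₁ ^ 2 * x + a ^ 2 * y + t₁ * a * q)
      - t₁ * (t₂ ^ 2 * x + a ^ 2 * y + t₂ * a * q) = s * a * (y * a - x * c) := by
    linear_combination (x * (t₁ - t₂)) * hprod
  have hpos : 0 < s * a * (y * a - x * c) :=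
    hcancel ▸ by nlinarith [mul_pos ht₂ h₁, mul_pos (neg_pos.2 ht₁) h₂]
  linarith [pos_of_mul_pos_right hpos (mul_pos hs ha).le]

namespace QuadraticMap

variable {E : Type*} [AddCommGroup E] [Module ℝ E]

theorem apply_add_smul (Q : QuadraticMap ℝ E ℝ) (s t : ℝ) (u v : E) :
    Q (s • u + t • v) = s ^ 2 * Q u + t ^ 2 * Q v + s * t * polar Q u v := by
  rw [QuadraticMap.map_add Q, QuadraticMap.map_smul, QuadraticMap.map_smul, polar_smul_left,
    polar_smul_right, smul_eq_mul, smul_eq_mul, smul_eq_mul, smul_eq_mul]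
  ring

theorem apply_mul_lt_of_pos_on_isotropic {Q₁ Q₂ : QuadraticMap ℝ E ℝ}
    (h : ∀ w, w ≠ 0 → Q₂ w = 0 → 0 < Q₁ w) {u v : E} (hu : 0 < Q₂ u) (hv : Q₂ v < 0) :
    Q₁ u * Q₂ v < Q₁ v * Q₂ u := by
  refine mul_lt_mul_of_pos_at_roots (p := polar Q₂ u v) (q := polar Q₁ u v) hu hv fun t ht => ?_
  have hQ₂ : Q₂ (t • u + Q₂ u • v) = Q₂ u * (t ^ 2 + polar Q₂ u v * t + Q₂ u * Q₂ v) := by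
    rw [apply_add_smul]; ring
  have hne : t • u + Q₂ u • v ≠ 0 := by
    intro h0
    have hQ := congrArg Q₂ (eq_neg_of_add_eq_zero_right h0)
    rw [QuadraticMap.map_neg, QuadraticMap.map_smul, QuadraticMap.map_smul, smul_eq_mul,
      smul_eq_mul] at hQ
    nlinarith [mul_pos hu hu, mul_self_nonneg t]
  simpa [apply_add_smul] using h _ hne (by rw [hQ₂, ht, mul_zero])

theorem posDef_of_forall_mem_sphere {F : Type*} [NormedAddCommGroup F] [NormedSpace ℝ F]
    {Q : QuadraticMap ℝ F ℝ} (h : ∀ w ∈ Metric.sphere (0 : F) 1, 0 < Q w) : Q.PosDef := by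
  intro x hx
  have := h ((‖x‖⁻¹ : ℝ) • x) (mem_sphere_zero_iff_norm.2 (norm_smul_inv_norm hx))
  rw [QuadraticMap.map_smul, smul_eq_mul] at this
  exact pos_of_mul_pos_right this (by positivity)

theorem exists_posDef_add_smul_iff {F : Type*} [NormedAddCommGroup F] [NormedSpace ℝ F]
    [ProperSpace F] {Q₁ Q₂ : QuadraticMap ℝ F ℝ} (hQ₁ : Continuous Q₁) (hQ₂ : Continuous Q₂) :
    (∃ σ : ℝ, (Q₁ + σ • Q₂).PosDef) ↔ ∀ w, w ≠ 0 → Q₂ w = 0 → 0 < Q₁ w := by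
  refine ⟨fun ⟨σ, hσ⟩ w hw h₀ => by simpa [h₀] using hσ w hw, fun h => ?_⟩
  obtain ⟨σ, hσ⟩ := exists_forall_pos_add_mul (isCompact_sphere 0 1) hQ₁ hQ₂
    (fun w hw => h w (ne_zero_of_mem_unit_sphere ⟨w, hw⟩))
    fun u _ v _ => apply_mul_lt_of_pos_on_isotropic h
  exact ⟨σ, posDef_of_forall_mem_sphere fun w hw => by simpa using hσ w hw⟩

end QuadraticMap

namespace Matrix

variable {n R : Type*} [Fintype n] [DecidableEq n] [CommRing R]

theorem toQuadraticForm'_apply (M : Matrix n n R) (x : n → R) :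
    M.toQuadraticForm' x = x ⬝ᵥ M *ᵥ x :=
  toLinearMap₂'_apply' M x x

theorem toQuadraticForm'_add_smul (A B : Matrix n n R) (σ : R) :
    (A + σ • B).toQuadraticForm' = A.toQuadraticForm' + σ • B.toQuadraticForm' := by
  ext x
  simp [toQuadraticForm'_apply, add_mulVec, smul_mulVec]

theorem continuous_toQuadraticForm' (M : Matrix n n ℝ) : Continuous M.toQuadraticForm' := by
  simp only [funext (toQuadraticForm'_apply M), dotProduct, mulVec]
  fun_prop

end Matrix

/-- `I_≻(A,B) ≠ ∅` iff `wᵀAw > 0` for every nonzero `w` with `wᵀBw = 0`. -/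
theorem stmt_0 {n : ℕ} (A B : Matrix (Fin n) (Fin n) ℝ)
    (hA : A.IsSymm) (hB : B.IsSymm) :
    (∃ σ : ℝ, (A + σ • B).PosDef) ↔
      ∀ w : Fin n → ℝ, w ≠ 0 → w ⬝ᵥ B *ᵥ w = 0 → 0 < w ⬝ᵥ A *ᵥ w := by
  have hposDef (σ : ℝ) :
      (A + σ • B).PosDef ↔ (A.toQuadraticForm' + σ • B.toQuadraticForm').PosDef := by
    rw [← toQuadraticForm'_add_smul]
    exact ⟨PosDef.toQuadraticForm', PosDef.of_toQuadraticForm' (hA.add (hB.smul σ))⟩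
  simp only [hposDef, QuadraticMap.exists_posDef_add_smul_iff A.continuous_toQuadraticForm'
    B.continuous_toQuadraticForm', toQuadraticForm'_apply]
end

section
/- Let A and B be real symmetric n×n matrices. If II_≻(A,B) ≠ ∅, i.e., there exist μ, σ ∈ ℝ with μA + σB positive definite, then Q(A) ∩ Q(B) = {0}. Conversely, if n ≥ 3 and Q(A) ∩ Q(B) = {0}, then II_≻(A,B) ≠ ∅. -/
/-!
The first implication is immediate. For the converse, look at the joint values
`Q_A x + i Q_B x ∈ ℂ` of the two quadratic forms on the unit sphere: a compact connected set
not containing `0`. If it contained two points `z` and `-t z'` with `t > 0`, coming from `x` and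
`y`, then for `(a, b) = (Q_A y, Q_B y)` the form `C = b Q_A - a Q_B` would vanish at `x` and `y`,
while `D = a Q_A + b Q_B` has opposite signs there. Since `n ≥ 3`, some path of nonzero
`C`-isotropic vectors runs from a point where `D > 0` to one where `D < 0`, and `D` vanishes
somewhere on it, producing a nonzero common isotropic vector of `Q_A` and `Q_B`.
So the set has no such antipodal pair; its arguments then fill a compact interval of length
`< π`, and the set lies in an open half-plane `{z | 0 < μ re z + σ im z}`, which says that
`μ A + σ B` is positive definite.
-/

open Matrix

open Module Set

namespace Complex

theorem eq_neg_ofReal_mul_of_arg_eq_add_pi {z w : ℂ} (hw : w ≠ 0) (h : arg z = arg w + Real.pi) :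
    z = -((‖z‖ / ‖w‖ : ℝ) * w) := by
  have hw' : (‖w‖ : ℂ) ≠ 0 := by exact_mod_cast norm_ne_zero_iff.mpr hw
  calc z = ‖z‖ * exp ((arg w + Real.pi : ℝ) * I) := by rw [← h, norm_mul_exp_arg_mul_I]
    _ = -((‖z‖ / ‖w‖ : ℝ) * (‖w‖ * exp (arg w * I))) := by
      push_cast
      rw [add_mul, exp_add, exp_pi_mul_I]
      field_simp
    _ = -((‖z‖ / ‖w‖ : ℝ) * w) := by rw [norm_mul_exp_arg_mul_I]

theorem re_mul_exp_neg_mul_I_pos {z : ℂ} (hz : z ≠ 0) {m : ℝ} (h : |arg z - m| < Real.pi / 2) :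
    0 < (z * exp (-(m * I))).re := by
  have : z * exp (-(m * I)) = ‖z‖ * exp ((arg z - m : ℝ) * I) := by
    conv_lhs => rw [← norm_mul_exp_arg_mul_I z]
    rw [mul_assoc, ← exp_add]
    push_cast
    ring_nf
  rw [this, re_ofReal_mul, exp_ofReal_mul_I_re]
  exact mul_pos (norm_pos_iff.mpr hz) (Real.cos_pos_of_mem_Ioo (abs_lt.mp h))

theorem exists_forall_re_mul_pos_of_subset_slitPlane {K : Set ℂ} (hKc : IsCompact K)
    (hKp : IsPreconnected K) (hKs : K ⊆ slitPlane)
    (hK : ∀ z ∈ K, ∀ w ∈ K, ∀ t : ℝ, 0 < t → z ≠ -(t * w)) :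
    ∃ c : ℂ, ∀ z ∈ K, 0 < (z * c).re := by
  rcases K.eq_empty_or_nonempty with rfl | hne
  · exact ⟨0, by simp⟩
  have harg : ContinuousOn arg K := fun z hz => (continuousAt_arg (hKs hz)).continuousWithinAt
  have hAc : IsCompact (arg '' K) := hKc.image_of_continuousOn harg
  obtain ⟨w, hwK, hw⟩ := hAc.sInf_mem (hne.image arg)
  obtain ⟨v, hvK, hv⟩ := hAc.sSup_mem (hne.image arg)
  set lo := sInf (arg '' K)
  set hi := sSup (arg '' K)
  have hbound : ∀ z ∈ K, lo ≤ arg z ∧ arg z ≤ hi := fun z hz =>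
    ⟨csInf_le hAc.bddBelow (mem_image_of_mem arg hz),
      le_csSup hAc.bddAbove (mem_image_of_mem arg hz)⟩
  have hgap : hi - lo < Real.pi := by
    by_contra! hge
    obtain ⟨z, hzK, hz⟩ := (hKp.image arg harg).Icc_subset ⟨w, hwK, hw⟩ ⟨v, hvK, hv⟩
      (⟨by linarith [Real.pi_pos], by linarith⟩ : lo + Real.pi ∈ Icc lo hi)
    refine hK z hzK w hwK _ (div_pos (norm_pos_iff.mpr (slitPlane_ne_zero (hKs hzK)))
      (norm_pos_iff.mpr (slitPlane_ne_zero (hKs hwK)))) ?_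
    exact eq_neg_ofReal_mul_of_arg_eq_add_pi (slitPlane_ne_zero (hKs hwK)) (by rw [hz, hw])
  refine ⟨exp (-(((lo + hi) / 2 : ℝ) * I)), fun z hz =>
    re_mul_exp_neg_mul_I_pos (slitPlane_ne_zero (hKs hz)) ?_⟩
  obtain ⟨h₁, h₂⟩ := hbound z hz
  rw [abs_lt]
  constructor <;> linarith

theorem exists_forall_re_mul_pos {K : Set ℂ} (hKc : IsCompact K) (hKp : IsPreconnected K)
    (hK : ∀ z ∈ K, ∀ w ∈ K, ∀ t : ℝ, 0 < t → z ≠ -(t * w)) :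
    ∃ c : ℂ, ∀ z ∈ K, 0 < (z * c).re := by
  rcases K.eq_empty_or_nonempty with rfl | ⟨z₀, hz₀⟩
  · exact ⟨0, by simp⟩
  have hz₀0 : z₀ ≠ 0 := fun h => hK z₀ hz₀ z₀ hz₀ 1 one_pos (by simp [h])
  have hcont : Continuous (· / z₀) := continuous_id.div_const z₀
  have hslit : (· / z₀) '' K ⊆ slitPlane := by
    rintro _ ⟨z, hz, rfl⟩
    rw [mem_slitPlane_iff]
    by_contra! ⟨hre, him⟩
    set r := -(z / z₀).re
    have hr : 0 ≤ r := by linarith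
    have hzr : z = -(r * z₀) := by
      have : z / z₀ = -r := Complex.ext (by simp [r]) (by simpa using him)
      field_simp at this
      linear_combination this
    rcases hr.eq_or_lt with hr0 | hr0
    · exact hK z hz z hz 1 one_pos (by simp [hzr, ← hr0])
    · exact hK z hz z₀ hz₀ r hr0 hzr
  have hanti : ∀ z ∈ (· / z₀) '' K, ∀ w ∈ (· / z₀) '' K, ∀ t : ℝ, 0 < t → z ≠ -(t * w) := by
    rintro _ ⟨z, hz, rfl⟩ _ ⟨w, hw, rfl⟩ t ht h
    refine hK z hz w hw t ht ?_
    field_simp at h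
    linear_combination h
  obtain ⟨c, hc⟩ := exists_forall_re_mul_pos_of_subset_slitPlane (hKc.image hcont)
    (hKp.image _ hcont.continuousOn) hslit hanti
  refine ⟨c / z₀, fun z hz => ?_⟩
  convert hc (z / z₀) (mem_image_of_mem _ hz) using 2
  ring

end Complex

theorem exists_ne_zero_apply_eq_zero_of_two_lt_finrank {K V : Type*} [Field K] [AddCommGroup V]
    [Module K V] (hV : 2 < finrank K V) (f g : V →ₗ[K] K) :
    ∃ k ≠ 0, f k = 0 ∧ g k = 0 := by
  have : FiniteDimensional K V := Module.finite_of_finrank_pos (by omega)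
  obtain ⟨k, hk, hk0⟩ := Submodule.exists_mem_ne_zero_of_ne_bot
    (LinearMap.ker_ne_bot_of_finrank_lt (f := f.prod g) (by simpa using hV))
  rw [LinearMap.mem_ker] at hk
  exact ⟨k, hk0, congrArg Prod.fst hk, congrArg Prod.snd hk⟩

namespace QuadraticMap

section VectorSpace

variable {V : Type*} [AddCommGroup V] [Module ℝ V]

theorem map_smul_add_smul (Q : QuadraticForm ℝ V) (a b : ℝ) (x y : V) :
    Q (a • x + b • y) = a ^ 2 * Q x + a * b * polar Q x y + b ^ 2 * Q y := by
  rw [QuadraticMap.map_add Q, QuadraticMap.map_smul, QuadraticMap.map_smul, polar_smul_left,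
    polar_smul_right]
  simp only [smul_eq_mul]
  ring

end VectorSpace

section NormedSpace

variable {E : Type*} [NormedAddCommGroup E] [NormedSpace ℝ E]

theorem posDef_of_forall_mem_sphere_s1 (Q : QuadraticForm ℝ E)
    (hQ : ∀ x ∈ Metric.sphere (0 : E) 1, 0 < Q x) : Q.PosDef := by
  intro x hx
  have hx' : ‖x‖ ≠ 0 := norm_ne_zero_iff.mpr hx
  have := hQ (‖x‖⁻¹ • x) (by simp [norm_smul, hx'])
  rw [QuadraticMap.map_smul, smul_eq_mul] at this
  exact pos_of_mul_pos_right this (by positivity)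

variable [FiniteDimensional ℝ E]

theorem continuous_of_finiteDimensional (Q : QuadraticForm ℝ E) : Continuous Q := by
  have h := (LinearMap.toContinuousBilinearMap (associated Q)).continuous₂.comp
    (continuous_id.prodMk continuous_id)
  convert h using 1
  ext x
  simp [associated_eq_self_apply]

theorem exists_common_isotropic_of_path {C D : QuadraticForm ℝ E} {γ : ℝ → E}
    (hγ : Continuous γ)
    (hC : ∀ t ∈ Icc (0 : ℝ) 1, C (γ t) = 0) (hγ0 : ∀ t ∈ Icc (0 : ℝ) 1, γ t ≠ 0)
    (hD₀ : 0 < D (γ 0)) (hD₁ : D (γ 1) < 0) :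
    ∃ u ≠ 0, C u = 0 ∧ D u = 0 := by
  obtain ⟨t, ht, hDt⟩ := intermediate_value_Icc' zero_le_one
    (D.continuous_of_finiteDimensional.comp hγ).continuousOn ⟨hD₁.le, hD₀.le⟩
  exact ⟨γ t, hγ0 t ht, hC t ht, hDt⟩

theorem exists_common_isotropic_of_isotropic_segment {C D : QuadraticForm ℝ E} {x y : E}
    (hx : C x = 0) (hy : C y = 0) (hxy : polar C x y = 0) (hDx : 0 < D x) (hDy : D y < 0) :
    ∃ u ≠ 0, C u = 0 ∧ D u = 0 := by
  refine exists_common_isotropic_of_path (γ := fun t => (1 - t) • x + t • y) (by fun_prop)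
    (fun t _ => by simp [map_smul_add_smul, hx, hy, hxy]) (fun t ht h => ?_)
    (by simpa using hDx) (by simpa using hDy)
  have hD : D ((1 - t) • x) = D (t • y) := by
    rw [eq_neg_of_add_eq_zero_left h, QuadraticMap.map_neg]
  rw [QuadraticMap.map_smul, QuadraticMap.map_smul, smul_eq_mul, smul_eq_mul] at hD
  rcases eq_or_ne t 0 with rfl | ht0
  · simp at hD; linarith
  · nlinarith [mul_pos (mul_self_pos.mpr ht0) (neg_pos.mpr hDy), mul_self_nonneg (1 - t)]

theorem exists_common_isotropic_of_polar_ne_zero {C D : QuadraticForm ℝ E} {v w k : E}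
    (hv : C v = 0) (hw : C w = 0) (hvw : polar C v w ≠ 0) (hvk : polar C v k = 0)
    (hwk : polar C w k = 0) (hk : C k ≠ 0) (hDv : 0 < D v) (hDw : D w < 0) :
    ∃ u ≠ 0, C u = 0 ∧ D u = 0 := by
  set l := -C k / polar C v w
  have hl : l ≠ 0 := div_ne_zero (neg_ne_zero.mpr hk) hvw
  have hlvw : l * polar C v w = -C k := div_mul_cancel₀ _ hvw
  have hpolar : ∀ t : ℝ, polar C v ((1 - t) ^ 2 • v + (l * t ^ 2) • w + (t * (1 - t)) • k)
      = -(C k * t ^ 2) := by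
    intro t
    simp only [polar_add_right, polar_smul_right, polar_self, hv, hvk, smul_eq_mul]
    linear_combination t ^ 2 * hlvw
  -- `C` vanishes on this path since it equals `t²(1-t)²(l * polar C v w + C k)` there
  refine exists_common_isotropic_of_path
    (γ := fun t => (1 - t) ^ 2 • v + (l * t ^ 2) • w + (t * (1 - t)) • k) (by fun_prop)
    (fun t _ => ?_) (fun t _ h => ?_) (by simpa using hDv) ?_
  · rw [QuadraticMap.map_add C, map_smul_add_smul, QuadraticMap.map_smul, polar_add_left,
      polar_smul_left, polar_smul_left, polar_smul_right, polar_smul_right, hv, hw, hvk, hwk]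
    simp only [smul_eq_mul]
    linear_combination (1 - t) ^ 2 * t ^ 2 * hlvw
  · have := hpolar t
    rw [h, polar_zero_right] at this
    have ht : t = 0 := by simpa [hk] using this
    subst ht
    simp at h
    simp [h] at hDv
  · simpa [QuadraticMap.map_smul] using mul_neg_of_pos_of_neg (mul_self_pos.mpr hl) hDw

theorem exists_common_isotropic_of_sign_change (hE : 3 ≤ finrank ℝ E) {C D : QuadraticForm ℝ E}
    {v w : E} (hv : C v = 0) (hw : C w = 0) (hDv : 0 < D v) (hDw : D w < 0) :
    ∃ u ≠ 0, C u = 0 ∧ D u = 0 := by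
  by_cases hvw : polar C v w = 0
  · exact exists_common_isotropic_of_isotropic_segment hv hw hvw hDv hDw
  obtain ⟨k, hk0, hvk, hwk⟩ :=
    exists_ne_zero_apply_eq_zero_of_two_lt_finrank (by omega) (polarBilin C v) (polarBilin C w)
  rw [polarBilin_apply_apply] at hvk hwk
  by_cases hk : C k = 0
  · rcases lt_trichotomy (D k) 0 with hDk | hDk | hDk
    · exact exists_common_isotropic_of_isotropic_segment hv hk hvk hDv hDk
    · exact ⟨k, hk0, hk, hDk⟩
    · exact exists_common_isotropic_of_isotropic_segment hk hw (by rwa [polar_comm]) hDk hDw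
  · exact exists_common_isotropic_of_polar_ne_zero hv hw hvw hvk hwk hk hDv hDw

theorem not_antipodal_of_jointly_anisotropic (hE : 3 ≤ finrank ℝ E) {Q₁ Q₂ : QuadraticForm ℝ E}
    (hQ : ∀ x, Q₁ x = 0 → Q₂ x = 0 → x = 0) {x y : E} (hy : y ≠ 0) {t : ℝ} (ht : 0 < t) :
    ¬(Q₁ x = -(t * Q₁ y) ∧ Q₂ x = -(t * Q₂ y)) := by
  rintro ⟨h₁, h₂⟩
  set a := Q₁ y
  set b := Q₂ y
  have hab : 0 < a ^ 2 + b ^ 2 := by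
    by_contra! h
    exact hy (hQ y (by nlinarith [sq_nonneg a, sq_nonneg b])
      (by nlinarith [sq_nonneg a, sq_nonneg b]))
  obtain ⟨u, hu, hCu, hDu⟩ := exists_common_isotropic_of_sign_change hE
    (C := b • Q₁ - a • Q₂) (D := a • Q₁ + b • Q₂) (v := y) (w := x)
    (by simp [a, b]; ring) (by simp [h₁, h₂]; ring) (by simp; nlinarith)
    (by simp [h₁, h₂]; nlinarith)
  simp only [_root_.sub_apply, _root_.add_apply, _root_.smul_apply, smul_eq_mul] at hCu hDu
  refine hu (hQ u ?_ ?_)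
  · exact (mul_eq_zero.mp (by linear_combination b * hCu + a * hDu :
      (a ^ 2 + b ^ 2) * Q₁ u = 0)).resolve_left hab.ne'
  · exact (mul_eq_zero.mp (by linear_combination b * hDu - a * hCu :
      (a ^ 2 + b ^ 2) * Q₂ u = 0)).resolve_left hab.ne'

theorem exists_posDef_smul_add_smul_of_jointly_anisotropic (hE : 3 ≤ finrank ℝ E)
    {Q₁ Q₂ : QuadraticForm ℝ E} (hQ : ∀ x, Q₁ x = 0 → Q₂ x = 0 → x = 0) :
    ∃ μ σ : ℝ, (μ • Q₁ + σ • Q₂).PosDef := by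
  let f : E → ℂ := fun x => ⟨Q₁ x, Q₂ x⟩
  have hf : Continuous f := Complex.equivRealProdCLM.symm.continuous.comp
    (Q₁.continuous_of_finiteDimensional.prodMk Q₂.continuous_of_finiteDimensional)
  have hrank : 1 < Module.rank ℝ E := by
    rw [← finrank_eq_rank]; exact_mod_cast (by omega : 1 < finrank ℝ E)
  obtain ⟨c, hc⟩ := Complex.exists_forall_re_mul_pos ((isCompact_sphere 0 1).image hf)
    ((isConnected_sphere hrank 0 zero_le_one).isPreconnected.image f hf.continuousOn) <| by
      rintro _ ⟨x, -, rfl⟩ _ ⟨y, hy, rfl⟩ t ht h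
      rw [Complex.ext_iff] at h
      simp only [f, Complex.neg_re, Complex.mul_re, Complex.ofReal_re, Complex.ofReal_im,
        zero_mul, sub_zero, Complex.neg_im, Complex.mul_im, add_zero] at h
      exact not_antipodal_of_jointly_anisotropic hE hQ (ne_zero_of_mem_unit_sphere ⟨y, hy⟩) ht h
  refine ⟨c.re, -c.im, posDef_of_forall_mem_sphere_s1 _ fun x hx => ?_⟩
  have := hc (f x) (mem_image_of_mem f hx)
  simp only [f, Complex.mul_re] at this
  simp only [_root_.add_apply, _root_.smul_apply, smul_eq_mul]
  linarith

end NormedSpace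

end QuadraticMap

theorem Matrix.toQuadraticForm'_apply_s1 {n R : Type*} [Fintype n] [DecidableEq n] [CommRing R]
    (M : Matrix n n R) (x : n → R) : M.toQuadraticForm' x = x ⬝ᵥ M *ᵥ x := by
  simp [toQuadraticForm', toLinearMap₂'_apply']

theorem Matrix.toQuadraticForm'_add {n R : Type*} [Fintype n] [DecidableEq n] [CommRing R]
    (M N : Matrix n n R) : (M + N).toQuadraticForm' = M.toQuadraticForm' + N.toQuadraticForm' := by
  ext x
  simp [toQuadraticForm'_apply_s1, add_mulVec]

theorem Matrix.toQuadraticForm'_smul {n R : Type*} [Fintype n] [DecidableEq n] [CommRing R]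
    (a : R) (M : Matrix n n R) : (a • M).toQuadraticForm' = a • M.toQuadraticForm' := by
  ext x
  simp [toQuadraticForm'_apply_s1, smul_mulVec]

/-- `II_≻(A,B) ≠ ∅` implies `Q(A) ∩ Q(B) = {0}`; conversely if `n ≥ 3`
and `Q(A) ∩ Q(B) = {0}` then `II_≻(A,B) ≠ ∅`. -/
theorem stmt_1 {n : ℕ} (A B : Matrix (Fin n) (Fin n) ℝ)
    (hA : A.IsSymm) (hB : B.IsSymm) :
    ((∃ μ σ : ℝ, (μ • A + σ • B).PosDef) →
      {v : Fin n → ℝ | v ⬝ᵥ A *ᵥ v = 0} ∩ {v : Fin n → ℝ | v ⬝ᵥ B *ᵥ v = 0} = {0}) ∧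
    (3 ≤ n →
      {v : Fin n → ℝ | v ⬝ᵥ A *ᵥ v = 0} ∩ {v : Fin n → ℝ | v ⬝ᵥ B *ᵥ v = 0} = {0} →
      ∃ μ σ : ℝ, (μ • A + σ • B).PosDef) := by
  refine ⟨fun ⟨μ, σ, hPD⟩ => ?_, fun hn hAB => ?_⟩
  · refine eq_singleton_iff_unique_mem.mpr ⟨by simp, fun v ⟨hAv, hBv⟩ => ?_⟩
    refine hPD.toQuadraticForm'.anisotropic v ?_
    simp_all [toQuadraticForm'_add, toQuadraticForm'_smul, toQuadraticForm'_apply_s1]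
  · obtain ⟨μ, σ, hPD⟩ := QuadraticMap.exists_posDef_smul_add_smul_of_jointly_anisotropic
      (Q₁ := A.toQuadraticForm') (Q₂ := B.toQuadraticForm') (by simpa using hn)
      fun x hAx hBx => hAB.subset ⟨by simpa [toQuadraticForm'_apply_s1] using hAx,
        by simpa [toQuadraticForm'_apply_s1] using hBx⟩
    refine ⟨μ, σ, PosDef.of_toQuadraticForm' ((hA.smul μ).add (hB.smul σ)) ?_⟩
    rwa [toQuadraticForm'_add, toQuadraticForm'_smul, toQuadraticForm'_smul]
end

section
/- Let A and B be real symmetric n×n matrices and suppose B is indefinite (there exist vectors v₁, v₂ with v₁ᵀBv₁ > 0 and v₂ᵀBv₂ < 0). Then I_≽(A,B) ≠ ∅ (i.e., there exists σ ∈ ℝ with A + σB positive semidefinite) if and only if wᵀAw ≥ 0 for every vector w with wᵀBw = 0. -/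
/-!
Necessity is immediate: on `wᵀBw = 0` the form of `A + σB` is `wᵀAw`. For sufficiency, `A + σB ≽ 0`
means `-uᵀAu / uᵀBu ≤ σ` whenever `uᵀBu > 0` and `σ ≤ -vᵀAv / vᵀBv` whenever `vᵀBv < 0`, so such a
`σ` exists iff every lower bound is below every upper bound. For such `u`, `v`, the quadratic
`t ↦ (u + tv)ᵀB(u + tv)` changes sign twice, at roots `t₋ < 0 < t₊` with `t₊ t₋ = uᵀBu / vᵀBv`; there
`(u + tv)ᵀA(u + tv) ≥ 0`, and the combination of these two inequalities that cancels the linear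
term is exactly the comparison of the two bounds.
-/

open Matrix

theorem exists_quadratic_roots_neg_pos {a b c : ℝ} (ha : a < 0) (hc : 0 < c) :
    ∃ x y, x < 0 ∧ 0 < y ∧ a * (x * x) + b * x + c = 0 ∧ a * (y * y) + b * y + c = 0 := by
  set s := √(discrim a b c)
  have hdiscrim : discrim a b c = s * s :=
    (Real.mul_self_sqrt (by rw [discrim]; nlinarith [sq_nonneg b])).symm
  have hbs : |b| < s := by
    rw [← Real.sqrt_sq_eq_abs]
    exact Real.sqrt_lt_sqrt (sq_nonneg b) (by rw [discrim]; nlinarith)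
  have hroot := quadratic_eq_zero_iff ha.ne hdiscrim
  refine ⟨(-b + s) / (2 * a), (-b - s) / (2 * a), ?_, ?_, (hroot _).2 (.inl rfl),
    (hroot _).2 (.inr rfl)⟩
  · exact div_neg_of_pos_of_neg (by linarith [le_abs_self b]) (by linarith)
  · exact div_pos_of_neg_of_neg (by linarith [neg_abs_le b]) (by linarith)

theorem mul_le_mul_of_nonneg_at_quadratic_roots {a₁ a₂ e b₁ b₂ c : ℝ} (hb₁ : 0 < b₁)
    (hb₂ : b₂ < 0) (h : ∀ t, b₂ * (t * t) + c * t + b₁ = 0 → 0 ≤ a₂ * (t * t) + e * t + a₁) :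
    a₁ * b₂ ≤ a₂ * b₁ := by
  obtain ⟨x, y, hx, hy, hxroot, hyroot⟩ := exists_quadratic_roots_neg_pos (b := c) hb₂ hb₁
  have hvieta : b₂ * (x * y) = b₁ := by
    have hsum : b₂ * (x + y) + c = 0 := by
      have : (y - x) * (b₂ * (x + y) + c) = 0 := by linear_combination hyroot - hxroot
      exact (mul_eq_zero.1 this).resolve_left (by linarith)
    linear_combination x * hsum - hxroot
  -- `y · q(x) - x · q(y)` kills the linear term of `q(t) = a₂ t² + e t + a₁`
  have hcomb : 0 ≤ (y - x) * (a₁ - a₂ * (x * y)) := by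
    have := h x hxroot
    have := h y hyroot
    nlinarith
  have hxy : a₂ * (x * y) ≤ a₁ :=
    le_of_sub_nonneg (nonneg_of_mul_nonneg_right hcomb (by linarith))
  calc a₁ * b₂ ≤ a₂ * (x * y) * b₂ := mul_le_mul_of_nonpos_right hxy hb₂.le
    _ = a₂ * b₁ := by rw [← hvieta]; ring

namespace Matrix

variable {n R : Type*} [Fintype n] [CommRing R]

theorem add_smul_dotProduct_mulVec_add_smul (M : Matrix n n R) (u v : n → R) (t : R) :
    (u + t • v) ⬝ᵥ M *ᵥ (u + t • v) =
      v ⬝ᵥ M *ᵥ v * (t * t) + (u ⬝ᵥ M *ᵥ v + v ⬝ᵥ M *ᵥ u) * t + u ⬝ᵥ M *ᵥ u := by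
  simp only [mulVec_add, mulVec_smul, dotProduct_add, add_dotProduct, dotProduct_smul,
    smul_dotProduct, smul_eq_mul]
  ring

theorem dotProduct_add_smul_mulVec (A B : Matrix n n R) (σ : R) (x : n → R) :
    x ⬝ᵥ (A + σ • B) *ᵥ x = x ⬝ᵥ A *ᵥ x + σ * (x ⬝ᵥ B *ᵥ x) := by
  rw [add_mulVec, smul_mulVec, dotProduct_add, dotProduct_smul, smul_eq_mul]

end Matrix

theorem exists_forall_le_forall_le {α : Type*} [ConditionallyCompleteLattice α]
    {X Y : Set α} (hX : X.Nonempty) (hY : Y.Nonempty)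
    (h : ∀ x ∈ X, ∀ y ∈ Y, x ≤ y) : ∃ σ, (∀ x ∈ X, x ≤ σ) ∧ ∀ y ∈ Y, σ ≤ y := by
  obtain ⟨y₀, hy₀⟩ := hY
  exact ⟨sSup X, fun x hx ↦ le_csSup ⟨y₀, fun x hx ↦ h x hx y₀ hy₀⟩ hx,
    fun y hy ↦ csSup_le hX fun x hx ↦ h x hx y hy⟩

theorem neg_div_le_neg_div_of_nonneg_on_isotropic {n : Type*} [Fintype n]
    {A B : Matrix n n ℝ} (h : ∀ w, w ⬝ᵥ B *ᵥ w = 0 → 0 ≤ w ⬝ᵥ A *ᵥ w) {u v : n → ℝ}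
    (hu : 0 < u ⬝ᵥ B *ᵥ u) (hv : v ⬝ᵥ B *ᵥ v < 0) :
    -(u ⬝ᵥ A *ᵥ u) / (u ⬝ᵥ B *ᵥ u) ≤ -(v ⬝ᵥ A *ᵥ v) / (v ⬝ᵥ B *ᵥ v) := by
  have hmul : u ⬝ᵥ A *ᵥ u * (v ⬝ᵥ B *ᵥ v) ≤ v ⬝ᵥ A *ᵥ v * (u ⬝ᵥ B *ᵥ u) := by
    refine mul_le_mul_of_nonneg_at_quadratic_roots (e := u ⬝ᵥ A *ᵥ v + v ⬝ᵥ A *ᵥ u)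
      (c := u ⬝ᵥ B *ᵥ v + v ⬝ᵥ B *ᵥ u) hu hv fun t ht ↦ ?_
    rw [← add_smul_dotProduct_mulVec_add_smul] at ht ⊢
    exact h _ ht
  rw [← neg_div_neg_eq (-(v ⬝ᵥ A *ᵥ v)), neg_neg, div_le_div_iff₀ hu (neg_pos.2 hv)]
  linarith

/-- if `B` is indefinite then `I_≽(A,B) ≠ ∅` iff `wᵀAw ≥ 0` for every
`w` with `wᵀBw = 0`. -/
theorem stmt_2 {n : ℕ} (A B : Matrix (Fin n) (Fin n) ℝ)
    (hA : A.IsSymm) (hB : B.IsSymm)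
    (hpos : ∃ v₁ : Fin n → ℝ, 0 < v₁ ⬝ᵥ B *ᵥ v₁)
    (hneg : ∃ v₂ : Fin n → ℝ, v₂ ⬝ᵥ B *ᵥ v₂ < 0) :
    (∃ σ : ℝ, (A + σ • B).PosSemidef) ↔
      ∀ w : Fin n → ℝ, w ⬝ᵥ B *ᵥ w = 0 → 0 ≤ w ⬝ᵥ A *ᵥ w := by
  constructor
  · rintro ⟨σ, hσ⟩ w hw
    simpa [dotProduct_add_smul_mulVec, hw] using hσ.dotProduct_mulVec_nonneg w
  intro h
  set ratio : (Fin n → ℝ) → ℝ := fun x ↦ -(x ⬝ᵥ A *ᵥ x) / (x ⬝ᵥ B *ᵥ x)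
  obtain ⟨v₁, hv₁⟩ := hpos
  obtain ⟨v₂, hv₂⟩ := hneg
  obtain ⟨σ, hlower, hupper⟩ := exists_forall_le_forall_le
    (X := ratio '' {u | 0 < u ⬝ᵥ B *ᵥ u}) (Y := ratio '' {v | v ⬝ᵥ B *ᵥ v < 0})
    ⟨_, v₁, hv₁, rfl⟩ ⟨_, v₂, hv₂, rfl⟩ <| by
      rintro _ ⟨u, hu, rfl⟩ _ ⟨v, hv, rfl⟩
      exact neg_div_le_neg_div_of_nonneg_on_isotropic h hu hv
  refine ⟨σ, posSemidef_iff_dotProduct_mulVec.2 ⟨isHermitian_iff_isSymm.2 (hA.add (hB.smul σ)),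
    fun x ↦ ?_⟩⟩
  rw [star_trivial, dotProduct_add_smul_mulVec]
  rcases lt_trichotomy (x ⬝ᵥ B *ᵥ x) 0 with hx | hx | hx
  · have := (le_div_iff_of_neg hx).1 (hupper _ ⟨x, hx, rfl⟩)
    linarith
  · simpa [hx] using h x hx
  · have := (div_le_iff₀ hx).1 (hlower _ ⟨x, hx, rfl⟩)
    linarith
end

section
/- Let A and B be real symmetric n×n matrices. If I_≽(A,B) is a single-point set, i.e., there is exactly one σ ∈ ℝ with A + σB positive semidefinite, then B is indefinite (there exist vectors v₁, v₂ with v₁ᵀBv₁ > 0 and v₂ᵀBv₂ < 0) and I_≻(A,B) = ∅ (there is no σ ∈ ℝ with A + σB positive definite). -/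
/-!
If `B` were semidefinite of either sign, adding `±B` to `A + σ₀ • B` would keep it positive
semidefinite and move `σ₀`. If `A + σ₀ • B` were positive definite, compactness of the unit
sphere would keep `A + (σ₀ + ε) • B` positive definite for all small `ε`.
-/

open Matrix Filter Topology

namespace Matrix

variable {ι : Type*} [Fintype ι]

lemma dotProduct_mulVec_smul_self (M : Matrix ι ι ℝ) (a : ℝ) (x : ι → ℝ) :
    (a • x) ⬝ᵥ M *ᵥ (a • x) = a ^ 2 * (x ⬝ᵥ M *ᵥ x) := by
  simp only [mulVec_smul, smul_dotProduct, dotProduct_smul, smul_eq_mul]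
  ring

lemma posDef_of_forall_mem_sphere {M : Matrix ι ι ℝ} (hM : M.IsHermitian)
    (h : ∀ u ∈ Metric.sphere (0 : ι → ℝ) 1, 0 < u ⬝ᵥ M *ᵥ u) : M.PosDef := by
  refine .of_dotProduct_mulVec_pos hM fun x hx => ?_
  have hr : 0 < ‖x‖ := norm_pos_iff.mpr hx
  have hu : ‖x‖⁻¹ • x ∈ Metric.sphere (0 : ι → ℝ) 1 := by
    simp [norm_smul, hr.ne']
  have hx' : x = ‖x‖ • ‖x‖⁻¹ • x := (smul_inv_smul₀ hr.ne' x).symm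
  rw [star_trivial, hx', dotProduct_mulVec_smul_self]
  exact mul_pos (by positivity) (h _ hu)

lemma PosDef.eventually_add_smul {M : Matrix ι ι ℝ} (hM : M.PosDef) (B : Matrix ι ι ℝ)
    (hB : B.IsHermitian) : ∀ᶠ ε in 𝓝 (0 : ℝ), (M + ε • B).PosDef := by
  have hq : Continuous fun p : ℝ × (ι → ℝ) => p.2 ⬝ᵥ (M + p.1 • B) *ᵥ p.2 := by
    simp only [dotProduct, mulVec]
    fun_prop
  have hsphere := (isCompact_sphere (0 : ι → ℝ) 1).eventually_forall_of_forall_eventually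
    (x₀ := (0 : ℝ)) (P := fun ε u => 0 < u ⬝ᵥ (M + ε • B) *ᵥ u) fun u hu => by
      have hu0 : u ≠ 0 := ne_zero_of_mem_unit_sphere ⟨u, hu⟩
      refine continuousAt_const.eventually_lt hq.continuousAt ?_
      simpa using hM.dotProduct_mulVec_pos hu0
  exact hsphere.mono fun ε hε =>
    posDef_of_forall_mem_sphere (hM.isHermitian.add (hB.smul (.all ε))) hε

lemma posSemidef_smul_of_forall_nonneg {B : Matrix ι ι ℝ} (hB : B.IsHermitian) {t : ℝ}
    (h : ∀ x, 0 ≤ t * (x ⬝ᵥ B *ᵥ x)) : (t • B).PosSemidef :=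
  .of_dotProduct_mulVec_nonneg (hB.smul (.all t)) fun x => by
    simpa [smul_mulVec, dotProduct_smul] using h x

omit [Fintype ι] in
lemma PosSemidef.add_smul_add {A B : Matrix ι ι ℝ} {σ t : ℝ} (h : (A + σ • B).PosSemidef)
    (ht : (t • B).PosSemidef) : (A + (σ + t) • B).PosSemidef := by
  rw [add_smul, ← add_assoc]
  exact h.add ht

end Matrix

theorem stmt_4_general {n : ℕ} (A B : Matrix (Fin n) (Fin n) ℝ)
    (hB : B.IsSymm) (σ₀ : ℝ)
    (hsingle : {σ : ℝ | (A + σ • B).PosSemidef} = {σ₀}) :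
    ((∃ v₁ : Fin n → ℝ, 0 < v₁ ⬝ᵥ B *ᵥ v₁) ∧ (∃ v₂ : Fin n → ℝ, v₂ ⬝ᵥ B *ᵥ v₂ < 0)) ∧
    ∀ σ : ℝ, ¬ (A + σ • B).PosDef := by
  have hmem (σ : ℝ) : (A + σ • B).PosSemidef ↔ σ = σ₀ :=
    (Set.ext_iff.mp hsingle σ).trans Set.mem_singleton_iff
  have hshift (t : ℝ) (ht : (A + (σ₀ + t) • B).PosSemidef) : t = 0 := by
    linarith [(hmem _).mp ht]
  have h₀ : (A + σ₀ • B).PosSemidef := (hmem σ₀).mpr rfl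
  have hB' : B.IsHermitian := isHermitian_iff_isSymm.mpr hB
  refine ⟨⟨?_, ?_⟩, fun σ hσ => ?_⟩
  · by_contra! h
    have hnegB := posSemidef_smul_of_forall_nonneg hB' (t := -1) fun x => by linarith [h x]
    exact absurd (hshift _ (h₀.add_smul_add hnegB)) (by norm_num)
  · by_contra! h
    have hposB := posSemidef_smul_of_forall_nonneg hB' (t := 1) fun x => by linarith [h x]
    exact one_ne_zero (hshift _ (h₀.add_smul_add hposB))
  · obtain rfl := (hmem σ).mp hσ.posSemidef
    obtain ⟨ε, hε, hε0⟩ := ((hσ.eventually_add_smul B hB').filter_mono nhdsWithin_le_nhds).and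
      self_mem_nhdsWithin |>.exists (f := 𝓝[≠] (0 : ℝ))
    rw [add_assoc, ← add_smul] at hε
    exact hε0 (hshift ε hε.posSemidef)

/-- if `I_≽(A,B)` is a single-point set then `B` is indefinite and
`I_≻(A,B) = ∅`. -/
theorem stmt_4 {n : ℕ} (A B : Matrix (Fin n) (Fin n) ℝ)
    (hA : A.IsSymm) (hB : B.IsSymm) (σ₀ : ℝ)
    (hsingle : {σ : ℝ | (A + σ • B).PosSemidef} = {σ₀}) :
    ((∃ v₁ : Fin n → ℝ, 0 < v₁ ⬝ᵥ B *ᵥ v₁) ∧ (∃ v₂ : Fin n → ℝ, v₂ ⬝ᵥ B *ᵥ v₂ < 0)) ∧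
    ∀ σ : ℝ, ¬ (A + σ • B).PosDef :=
  stmt_4_general A B hB σ₀ hsingle
end

section
/- Let A and B be real symmetric n×n matrices and suppose there exist σ₁ ≠ σ₂ in ℝ such that A + σ₁B and A + σ₂B are both positive semidefinite. Then Q(A) ∩ Q(B) = N(A) ∩ N(B), i.e., a vector x satisfies xᵀAx = 0 and xᵀBx = 0 if and only if Ax = 0 and Bx = 0. -/
open Matrix

/-- if `A + σ₁B ≽ 0` and `A + σ₂B ≽ 0` for `σ₁ ≠ σ₂`, then
`Q(A) ∩ Q(B) = N(A) ∩ N(B)`. -/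
theorem stmt_5 {n : ℕ} (A B : Matrix (Fin n) (Fin n) ℝ)
    (hA : A.IsSymm) (hB : B.IsSymm) (σ₁ σ₂ : ℝ) (hne : σ₁ ≠ σ₂)
    (h₁ : (A + σ₁ • B).PosSemidef) (h₂ : (A + σ₂ • B).PosSemidef) :
    ∀ x : Fin n → ℝ,
      (x ⬝ᵥ A *ᵥ x = 0 ∧ x ⬝ᵥ B *ᵥ x = 0) ↔ (A *ᵥ x = 0 ∧ B *ᵥ x = 0) := by
  intro x
  constructor
  · rintro ⟨ha, hb⟩
    have e1 : (A + σ₁ • B) *ᵥ x = 0 := by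
      rw [← h₁.dotProduct_mulVec_zero_iff]
      simp [add_mulVec, smul_mulVec, dotProduct_add, dotProduct_smul, ha, hb]
    have e2 : (A + σ₂ • B) *ᵥ x = 0 := by
      rw [← h₂.dotProduct_mulVec_zero_iff]
      simp [add_mulVec, smul_mulVec, dotProduct_add, dotProduct_smul, ha, hb]
    rw [add_mulVec, smul_mulVec] at e1 e2
    have hBx : B *ᵥ x = 0 := by
      have h := congrArg₂ (· - ·) e1 e2
      simp only [add_sub_add_left_eq_sub, sub_zero, ← sub_smul] at h
      have := smul_eq_zero.mp h
      rcases this with h' | h'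
      · exact absurd (sub_eq_zero.mp h') hne
      · exact h'
    have hAx : A *ᵥ x = 0 := by
      have := e1
      rw [hBx, smul_zero, add_zero] at this
      exact this
    exact ⟨hAx, hBx⟩
  · rintro ⟨ha, hb⟩
    rw [ha, hb, dotProduct_zero]
    exact ⟨rfl, rfl⟩
end

section
/- Let A and B be real symmetric n×n matrices and suppose there exist σ₁ ≠ σ₂ in ℝ such that A + σ₁B and A + σ₂B are both positive semidefinite. Then A and B are simultaneously diagonalizable via congruence. -/
/-!
Since `σ₁ ≠ σ₂`, both `A` and `B` are linear combinations of `A + σ₁ • B` and `A + σ₂ • B`, so it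
suffices to diagonalize two positive semidefinite matrices `S₁, S₂` by one congruence. A congruence
turns `S₁ + S₂` into a diagonal projection `J`; then `T₁ + T₂ = J` with `T₁, T₂ ≽ 0` forces `T₁` to
vanish on the kernel of `J`, i.e. `T₁ * (1 - J) = 0`. Hence `T₁` and `1 - J` are the positive and
negative parts of `T₁ - (1 - J)`, so an orthonormal eigenbasis of that matrix diagonalizes `T₁`,
`1 - J`, and therefore also `T₂ = 1 - (1 - J) - T₁`.
-/

open Matrix

open scoped MatrixOrder ComplexOrder

namespace Matrix

variable {n 𝕜 : Type*} [Fintype n] [DecidableEq n]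

/-- `A` and `B` are simultaneously diagonalizable via congruence (SDC). -/
def IsSDC (A B : Matrix n n ℝ) : Prop :=
  ∃ C : Matrix n n ℝ, IsUnit C.det ∧ (Cᵀ * A * C).IsDiag ∧ (Cᵀ * B * C).IsDiag

lemma IsSDC.of_transpose_mul_mul {A B C : Matrix n n ℝ} (hC : IsUnit C.det)
    (h : IsSDC (Cᵀ * A * C) (Cᵀ * B * C)) : IsSDC A B := by
  obtain ⟨D, hD, hA, hB⟩ := h
  refine ⟨C * D, by rw [det_mul]; exact hC.mul hD, ?_, ?_⟩
  · simpa only [transpose_mul, mul_assoc] using hA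
  · simpa only [transpose_mul, mul_assoc] using hB

lemma IsSDC.smul_add_smul {A B : Matrix n n ℝ} (h : IsSDC A B) (a b c d : ℝ) :
    IsSDC (a • A + b • B) (c • A + d • B) := by
  obtain ⟨C, hC, hA, hB⟩ := h
  refine ⟨C, hC, ?_, ?_⟩ <;>
    simpa only [mul_add, add_mul, Matrix.mul_smul, Matrix.smul_mul] using
      (hA.smul _).add (hB.smul _)

variable [RCLike 𝕜]

lemma IsHermitian.isDiag_star_mul_cfc_mul {M : Matrix n n 𝕜} (hM : M.IsHermitian) (f : ℝ → ℝ) :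
    (star (hM.eigenvectorUnitary : Matrix n n 𝕜) * cfc f M * hM.eigenvectorUnitary).IsDiag := by
  rw [hM.cfc_eq, IsHermitian.cfc, Unitary.conjStarAlgAut_apply]
  simp only [← mul_assoc, Unitary.coe_star_mul_self, one_mul]
  simp only [mul_assoc, Unitary.coe_star_mul_self, mul_one]
  exact isDiag_diagonal _

/-- `P` and `K` are the positive and negative parts of `P - K`, hence functions of `P - K`
diagonalized by its eigenvectors. -/
lemma PosSemidef.exists_unitary_isDiag_of_mul_eq_zero {P K : Matrix n n 𝕜} (hP : P.PosSemidef)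
    (hK : K.PosSemidef) (hPK : P * K = 0) :
    ∃ U ∈ unitaryGroup n 𝕜, (star U * P * U).IsDiag ∧ (star U * K * U).IsDiag := by
  have hM : (P - K).IsHermitian := hP.isHermitian.sub hK.isHermitian
  obtain ⟨hpos, hneg⟩ := CFC.posPart_negPart_unique rfl hPK
    (nonneg_iff_posSemidef.2 hP) (nonneg_iff_posSemidef.2 hK)
  rw [CFC.posPart_def, cfcₙ_eq_cfc] at hpos
  rw [CFC.negPart_def, cfcₙ_eq_cfc] at hneg
  refine ⟨hM.eigenvectorUnitary, hM.eigenvectorUnitary.2, ?_, ?_⟩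
  · simpa only [hpos] using hM.isDiag_star_mul_cfc_mul (·⁺)
  · simpa only [hneg] using hM.isDiag_star_mul_cfc_mul (·⁻)

lemma PosSemidef.apply_eq_zero_of_diag_eq_zero {S : Matrix n n 𝕜} (hS : S.PosSemidef) {i : n}
    (hi : S i i = 0) (j : n) : S j i = 0 := by
  have hcol : S *ᵥ Pi.single i 1 = 0 := by
    rw [← hS.dotProduct_mulVec_zero_iff]
    simpa [mulVec_single, single_dotProduct] using hi
  simpa [mulVec_single] using congrFun hcol j

/-- The congruence rescales the eigenvectors of each nonzero eigenvalue `μ` by `μ ^ (-1/2)`. -/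
lemma PosSemidef.exists_transpose_mul_mul_eq_diagonal {S : Matrix n n ℝ} (hS : S.PosSemidef) :
    ∃ C : Matrix n n ℝ, IsUnit C.det ∧ ∃ d : n → ℝ, (∀ i, d i = 0 ∨ d i = 1) ∧
      Cᵀ * S * C = diagonal d := by
  set U : Matrix n n ℝ := (hS.isHermitian.eigenvectorUnitary : Matrix n n ℝ)
  set μ := hS.isHermitian.eigenvalues
  set e : n → ℝ := fun i => if μ i = 0 then 1 else (√(μ i))⁻¹
  have hsqrt : ∀ i, μ i ≠ 0 → √(μ i) ≠ 0 := fun i h =>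
    Real.sqrt_ne_zero'.2 ((hS.eigenvalues_nonneg i).lt_of_ne' h)
  have he : ∀ i, e i ≠ 0 := by
    intro i
    by_cases h : μ i = 0
    · simp [e, h]
    · simpa [e, h] using hsqrt i h
  have hspec : Uᵀ * S * U = diagonal μ := by
    simpa [U, μ, star_eq_conjTranspose, Function.comp_def]
      using hS.isHermitian.conjStarAlgAut_star_eigenvectorUnitary
  refine ⟨U * diagonal e, ?_, fun i => if μ i = 0 then 0 else 1, fun i => by grind, ?_⟩
  · rw [det_mul, det_diagonal]
    exact (UnitaryGroup.det_isUnit hS.isHermitian.eigenvectorUnitary).mul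
      (isUnit_iff_ne_zero.2 (Finset.prod_ne_zero_iff.2 fun i _ => he i))
  · calc (U * diagonal e)ᵀ * S * (U * diagonal e) = diagonal e * (Uᵀ * S * U) * diagonal e := by
          simp only [transpose_mul, diagonal_transpose, mul_assoc]
      _ = diagonal fun i => if μ i = 0 then 0 else 1 := by
          rw [hspec, diagonal_mul_diagonal, diagonal_mul_diagonal]
          congr 1
          funext i
          by_cases h : μ i = 0
          · simp [h]
          · have hμ : √(μ i) ^ 2 = μ i := Real.sq_sqrt (hS.eigenvalues_nonneg i)
            have hs := hsqrt i h
            simp only [e, h, if_false]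
            field_simp
            rw [hμ]

lemma isSDC_of_posSemidef_of_add_eq_diagonal {T₁ T₂ : Matrix n n ℝ} (h₁ : T₁.PosSemidef)
    (h₂ : T₂.PosSemidef) {d : n → ℝ} (hd : ∀ i, d i = 0 ∨ d i = 1)
    (hsum : T₁ + T₂ = diagonal d) : IsSDC T₁ T₂ := by
  have hK : (diagonal (1 - d)).PosSemidef :=
    PosSemidef.diagonal fun i => by rcases hd i with h | h <;> simp [h]
  have hT₁K : T₁ * diagonal (1 - d) = 0 := by
    ext i k
    rw [mul_diagonal, zero_apply]
    rcases hd k with h | h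
    · have hkk : T₁ k k + T₂ k k = 0 := by simpa [h] using congrFun (congrFun hsum k) k
      have hT₁kk : T₁ k k = 0 := by linarith [h₁.diag_nonneg (i := k), h₂.diag_nonneg (i := k)]
      rw [h₁.apply_eq_zero_of_diag_eq_zero hT₁kk i, zero_mul]
    · simp [h]
  obtain ⟨U, hU, hT₁U, hKU⟩ := h₁.exists_unitary_isDiag_of_mul_eq_zero hK hT₁K
  have hstar : star U = Uᵀ := by rw [star_eq_conjTranspose, conjTranspose_eq_transpose_of_trivial]
  have hT₂ : T₂ = 1 - diagonal (1 - d) - T₁ := by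
    rw [← diagonal_one, diagonal_sub]
    simp only [Pi.sub_apply, Pi.one_apply, sub_sub_cancel, ← hsum]
    abel
  have hT₂U : Uᵀ * T₂ * U = 1 - Uᵀ * diagonal (1 - d) * U - Uᵀ * T₁ * U := by
    rw [hT₂, ← hstar, mul_sub, mul_sub, sub_mul, sub_mul, mul_one, mem_unitaryGroup_iff'.1 hU]
  refine ⟨U, isUnit_det_of_left_inverse (mem_unitaryGroup_iff'.1 hU), hstar ▸ hT₁U, ?_⟩
  rw [hT₂U]
  exact (isDiag_one.sub (hstar ▸ hKU)).sub (hstar ▸ hT₁U)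

theorem IsSDC.of_posSemidef {A B : Matrix n n ℝ} (hA : A.PosSemidef) (hB : B.PosSemidef) :
    IsSDC A B := by
  obtain ⟨C, hC, d, hd, hCd⟩ := (hA.add hB).exists_transpose_mul_mul_eq_diagonal
  have hconj {S : Matrix n n ℝ} (hS : S.PosSemidef) : (Cᵀ * S * C).PosSemidef := by
    simpa only [conjTranspose_eq_transpose_of_trivial] using hS.conjTranspose_mul_mul_same C
  refine .of_transpose_mul_mul hC
    (isSDC_of_posSemidef_of_add_eq_diagonal (hconj hA) (hconj hB) hd ?_)
  rw [← hCd, mul_add, add_mul]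

end Matrix

theorem stmt_7_general {n : ℕ} (A B : Matrix (Fin n) (Fin n) ℝ)
    (σ₁ σ₂ : ℝ) (hne : σ₁ ≠ σ₂)
    (h₁ : (A + σ₁ • B).PosSemidef) (h₂ : (A + σ₂ • B).PosSemidef) :
    ∃ C : Matrix (Fin n) (Fin n) ℝ, IsUnit C.det ∧ (Cᵀ * A * C).IsDiag ∧ (Cᵀ * B * C).IsDiag := by
  have hσ : σ₂ - σ₁ ≠ 0 := sub_ne_zero.2 hne.symm
  show IsSDC A B
  convert (IsSDC.of_posSemidef h₁ h₂).smul_add_smul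
    (σ₂ / (σ₂ - σ₁)) (-σ₁ / (σ₂ - σ₁)) (-1 / (σ₂ - σ₁)) (1 / (σ₂ - σ₁)) using 1 <;>
    match_scalars <;> field_simp <;> ring

/-- if `A + σ₁B ≽ 0` and `A + σ₂B ≽ 0` for `σ₁ ≠ σ₂`, then `A` and `B`
are simultaneously diagonalizable via congruence. -/
theorem stmt_7 {n : ℕ} (A B : Matrix (Fin n) (Fin n) ℝ)
    (hA : A.IsSymm) (hB : B.IsSymm) (σ₁ σ₂ : ℝ) (hne : σ₁ ≠ σ₂)
    (h₁ : (A + σ₁ • B).PosSemidef) (h₂ : (A + σ₂ • B).PosSemidef) :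
    ∃ C : Matrix (Fin n) (Fin n) ℝ, IsUnit C.det ∧ (Cᵀ * A * C).IsDiag ∧ (Cᵀ * B * C).IsDiag :=
  stmt_7_general A B σ₁ σ₂ hne h₁ h₂
end

section
/- Let A and B be real symmetric n×n matrices with Q(A) ∩ Q(B) = N(A) ∩ N(B) and dim(N(A) ∩ N(B)) ≤ n − 3. Then there exists a pair (μ, σ) ∈ ℝ² with (μ, σ) ≠ (0, 0) such that μA + σB is positive semidefinite and N(μA + σB) = N(A) ∩ N(B). -/
/-!
Restricted to a complement `W` of `N(A) ∩ N(B)`, the forms `q_A(v) = vᵀAv` and `q_B(v) = vᵀBv`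
have no common nontrivial zero, and `dim W ≥ 3`. The image of the unit sphere of `W` under
`v ↦ q_A(v) + i q_B(v)` then contains no two opposite directions: otherwise, after rotating the
pencil, some form `P` of the pencil would take both signs on the null cone of another form `Q`;
as `dim W ≥ 3`, the two points can be joined by a curve on that null cone avoiding `0`, and `P`
would vanish somewhere on it. A compact connected subset of `ℂ` without opposite directions lies
in an open half-plane, whose inner normal is the pair `(μ, σ)`: the form `μ q_A + σ q_B` is
positive definite on `W` and vanishes on `N(A) ∩ N(B)`.
-/

open Matrix QuadraticMap Set Module

namespace QuadraticForm

variable {V : Type*} [AddCommGroup V] [Module ℝ V]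

theorem apply_smul_add_smul_add_smul (P : QuadraticForm ℝ V) (a b c : ℝ) (x y w : V) :
    P (a • x + b • y + c • w) = a ^ 2 * P x + b ^ 2 * P y + c ^ 2 * P w
      + a * b * polar P x y + a * c * polar P x w + b * c * polar P y w := by
  simp only [QuadraticMap.map_add P, QuadraticMap.map_smul, polar_add_left, polar_smul_left,
    polar_smul_right, smul_eq_mul]
  ring

theorem eq_zero_of_smul_add_smul_eq_zero (P : QuadraticForm ℝ V) {x y : V} (hx : 0 < P x)
    (hy : P y < 0) {a b : ℝ} (h : a • x + b • y = 0) : a = 0 ∧ b = 0 := by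
  have hab : a ^ 2 * P x = b ^ 2 * P y := by
    rw [← smul_eq_mul, ← smul_eq_mul, pow_two, pow_two, ← QuadraticMap.map_smul,
      ← QuadraticMap.map_smul, eq_neg_of_add_eq_zero_left h, QuadraticMap.map_neg]
  have ha : a ^ 2 * P x = 0 := by nlinarith [sq_nonneg a, sq_nonneg b]
  have hb : b ^ 2 * P y = 0 := hab ▸ ha
  exact ⟨by simpa [hx.ne'] using ha, by simpa [hy.ne] using hb⟩

theorem exists_ne_zero_polar_eq_zero (Q : QuadraticForm ℝ V) (hV : 3 ≤ finrank ℝ V) (x y : V) :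
    ∃ w ≠ 0, polar Q x w = 0 ∧ polar Q y w = 0 := by
  have : FiniteDimensional ℝ V := Module.finite_of_finrank_pos (by omega)
  have hker : LinearMap.ker ((polarBilin Q x).prod (polarBilin Q y)) ≠ ⊥ :=
    LinearMap.ker_ne_bot_of_finrank_lt (by simp; omega)
  obtain ⟨w, hw, hw0⟩ := Submodule.exists_mem_ne_zero_of_ne_bot hker
  exact ⟨w, hw0, by simpa [Prod.ext_iff] using hw⟩

def JointlyAnisotropic (P Q : QuadraticForm ℝ V) : Prop :=
  ∀ v, P v = 0 → Q v = 0 → v = 0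

variable {P Q : QuadraticForm ℝ V}

theorem exists_eq_zero_of_path (hPQ : JointlyAnisotropic P Q) (x y w : V)
    {a b c : ℝ → ℝ} (ha : Continuous a) (hb : Continuous b) (hc : Continuous c)
    (hQ : ∀ t ∈ Icc (0 : ℝ) 1, Q (a t • x + b t • y + c t • w) = 0)
    (h₀ : 0 ≤ P (a 0 • x + b 0 • y + c 0 • w)) (h₁ : P (a 1 • x + b 1 • y + c 1 • w) ≤ 0) :
    ∃ t ∈ Icc (0 : ℝ) 1, a t • x + b t • y + c t • w = 0 := by
  have hcont : Continuous fun t => P (a t • x + b t • y + c t • w) := by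
    simp only [apply_smul_add_smul_add_smul]
    fun_prop
  obtain ⟨t, ht, hPt⟩ := intermediate_value_Icc' zero_le_one hcont.continuousOn ⟨h₁, h₀⟩
  exact ⟨t, ht, hPQ _ hPt (hQ t ht)⟩

theorem nonneg_of_pos_of_isotropic_of_polar_eq_zero (hPQ : JointlyAnisotropic P Q) {x y : V}
    (hQx : Q x = 0) (hQy : Q y = 0) (hxy : polar Q x y = 0) (hPx : 0 < P x) : 0 ≤ P y := by
  by_contra! hPy
  obtain ⟨t, -, ht⟩ := exists_eq_zero_of_path hPQ x y x (a := fun t => 1 - t) (b := id)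
    (c := 0) (by fun_prop) (by fun_prop) (by fun_prop)
    (fun t _ => by rw [apply_smul_add_smul_add_smul]; simp [hQx, hQy, hxy])
    (by simpa using hPx.le) (by simpa using hPy.le)
  simp only [Pi.zero_apply, zero_smul, add_zero, id] at ht
  obtain ⟨h₁, h₂⟩ := eq_zero_of_smul_add_smul_eq_zero P hPx hPy ht
  linarith

theorem nonneg_of_pos_of_isotropic (hPQ : JointlyAnisotropic P Q) (hV : 3 ≤ finrank ℝ V)
    {x y : V} (hQx : Q x = 0) (hQy : Q y = 0) (hPx : 0 < P x) : 0 ≤ P y := by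
  by_contra! hPy
  obtain ⟨w, hw0, hxw, hyw⟩ := exists_ne_zero_polar_eq_zero Q hV x y
  rcases eq_or_ne (Q w) 0 with hQw | hQw
  · rcases lt_or_gt_of_ne fun h => hw0 (hPQ w h hQw) with hPw | hPw
    · exact hPw.not_ge (nonneg_of_pos_of_isotropic_of_polar_eq_zero hPQ hQx hQw hxw hPx)
    · exact hPy.not_ge (nonneg_of_pos_of_isotropic_of_polar_eq_zero hPQ hQw hQy
        ((polar_comm Q w y).trans hyw) hPw)
  -- the curve `(1 - t) x + ε t y + √(κ t (1 - t)) w` lies on the cone `Q = 0`,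
  -- the sign `ε = ±1` being chosen to make `κ ≥ 0`
  set β := polar (Q : V → ℝ) x y
  obtain ⟨ε, hε, hεβ⟩ : ∃ ε : ℝ, ε ^ 2 = 1 ∧ ε * β * Q w ≤ 0 := by
    rcases le_total (β * Q w) 0 with h | h
    · exact ⟨1, by norm_num, by linarith⟩
    · exact ⟨-1, by norm_num, by linarith⟩
  set κ := -(ε * β) / Q w
  have hκQ : κ * Q w = -(ε * β) := div_mul_cancel₀ _ hQw
  have hκ : 0 ≤ κ := by
    have : κ * Q w ^ 2 = -(ε * β * Q w) := by rw [pow_two, ← mul_assoc, hκQ]; ring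
    by_contra! h
    nlinarith [mul_neg_of_neg_of_pos h (sq_pos_of_ne_zero hQw)]
  set r : ℝ → ℝ := fun t => Real.sqrt (κ * (t * (1 - t)))
  have hr : ∀ t ∈ Icc (0 : ℝ) 1, r t ^ 2 = κ * (t * (1 - t)) := fun t ht =>
    Real.sq_sqrt (mul_nonneg hκ (mul_nonneg ht.1 (sub_nonneg.mpr ht.2)))
  obtain ⟨t, ht, hzero⟩ := exists_eq_zero_of_path hPQ x y w (a := fun t => 1 - t)
    (b := fun t => ε * t) (c := r) (by fun_prop) (by fun_prop) (by fun_prop)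
    (fun t ht => by
      rw [apply_smul_add_smul_add_smul, hr t ht, hQx, hQy, hxw, hyw]
      linear_combination (t * (1 - t)) * hκQ)
    (by simpa [r] using hPx.le)
    (by simpa [r, QuadraticMap.map_smul, ← pow_two, hε] using hPy.le)
  have hrt : r t = 0 := by
    have := congrArg (fun v => polar Q v w) hzero
    simp only [polar_add_left, polar_smul_left, polar_self, hxw, hyw, polar_zero_left,
      smul_eq_mul] at this
    simpa [hQw] using this
  rw [hrt, zero_smul, add_zero] at hzero
  obtain ⟨h₁, h₂⟩ := eq_zero_of_smul_add_smul_eq_zero P hPx hPy hzero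
  have hε0 : ε ≠ 0 := by rintro rfl; norm_num at hε
  simp only [mul_eq_zero, hε0, false_or] at h₂
  linarith

theorem eq_zero_of_apply_eq_neg_mul (hPQ : JointlyAnisotropic P Q) (hV : 3 ≤ finrank ℝ V)
    {v₀ v₁ : V} {t : ℝ} (ht : 0 ≤ t) (hP : P v₁ = -t * P v₀) (hQ : Q v₁ = -t * Q v₀) :
    v₁ = 0 := by
  by_contra hv₁
  have ht : 0 < t := ht.lt_of_ne <| by
    rintro rfl
    exact hv₁ (hPQ v₁ (by simpa using hP) (by simpa using hQ))
  have hρ : 0 < P v₀ ^ 2 + Q v₀ ^ 2 := by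
    by_contra! h
    have hP₀ : P v₀ = 0 := by nlinarith [sq_nonneg (P v₀), sq_nonneg (Q v₀)]
    have hQ₀ : Q v₀ = 0 := by nlinarith [sq_nonneg (P v₀), sq_nonneg (Q v₀)]
    exact hv₁ (hPQ v₁ (by simp [hP, hP₀]) (by simp [hQ, hQ₀]))
  set ρ := P v₀ ^ 2 + Q v₀ ^ 2
  -- rotate the pencil so that `v₀` and `v₁` both lie on the cone `Q' = 0`
  set P' := P v₀ • P + Q v₀ • Q
  set Q' := Q v₀ • P - P v₀ • Q
  have hP'Q' : JointlyAnisotropic P' Q' := by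
    intro v h₁ h₂
    simp only [P', Q', _root_.add_apply, _root_.sub_apply, _root_.smul_apply,
      smul_eq_mul] at h₁ h₂
    refine hPQ v ?_ ?_
    · have : ρ * P v = 0 := by linear_combination P v₀ * h₁ + Q v₀ * h₂
      exact (mul_eq_zero.mp this).resolve_left hρ.ne'
    · have : ρ * Q v = 0 := by linear_combination Q v₀ * h₁ - P v₀ * h₂
      exact (mul_eq_zero.mp this).resolve_left hρ.ne'
  have key := nonneg_of_pos_of_isotropic hP'Q' hV (x := v₀) (y := v₁)
    (by simp [Q']; ring) (by simp [Q', hP, hQ]; ring) (by simpa [P', ← pow_two] using hρ)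
  simp only [P', _root_.add_apply, _root_.smul_apply, smul_eq_mul, hP, hQ] at key
  nlinarith

theorem div_mem_slitPlane (hPQ : JointlyAnisotropic P Q) (hV : 3 ≤ finrank ℝ V)
    {v₀ v₁ : V} (hv₀ : v₀ ≠ 0) (hv₁ : v₁ ≠ 0) :
    (⟨P v₁, Q v₁⟩ : ℂ) / ⟨P v₀, Q v₀⟩ ∈ Complex.slitPlane := by
  have hc₀ : (⟨P v₀, Q v₀⟩ : ℂ) ≠ 0 := fun h =>
    hv₀ (hPQ v₀ (congrArg Complex.re h) (congrArg Complex.im h))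
  by_contra h
  rw [Complex.mem_slitPlane_iff, not_or, not_lt, not_not] at h
  set r := (⟨P v₁, Q v₁⟩ : ℂ) / ⟨P v₀, Q v₀⟩
  have hr : (⟨P v₁, Q v₁⟩ : ℂ) = (r.re : ℂ) * ⟨P v₀, Q v₀⟩ := by
    rw [show (r.re : ℂ) = r from Complex.ext rfl (by simp [h.2]), div_mul_cancel₀ _ hc₀]
  refine hv₁ (eq_zero_of_apply_eq_neg_mul hPQ hV (v₀ := v₀) (t := -r.re) (neg_nonneg.mpr h.1)
    ?_ ?_)
  · simpa using congrArg Complex.re hr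
  · simpa using congrArg Complex.im hr

end QuadraticForm

theorem Complex.exists_forall_re_mul_pos_s9 {C : Set ℂ} (hCc : IsCompact C) (hC : IsConnected C)
    (hslit : ∀ c₁ ∈ C, ∀ c₂ ∈ C, c₂ / c₁ ∈ slitPlane) : ∃ d : ℂ, ∀ c ∈ C, 0 < (c * d).re := by
  obtain ⟨a, ha⟩ := hC.nonempty
  have hC0 : ∀ c ∈ C, c ≠ 0 := fun c hc => by
    simpa using slitPlane_ne_zero (hslit c hc c hc)
  have harg : ContinuousOn (fun c => arg (c / a)) C := fun c hc =>
    ((continuousAt_arg (hslit a ha c hc)).comp (f := fun c => c / a)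
      (continuous_id.div_const a).continuousAt).continuousWithinAt
  set Θ := (fun c => arg (c / a)) '' C
  have hΘc : IsCompact Θ := hCc.image_of_continuousOn harg
  have hΘ : IsConnected Θ := hC.image _ harg
  set α := sInf Θ
  set β := sSup Θ
  have hα : α ∈ Θ := hΘc.sInf_mem hΘ.nonempty
  have hβ : β ∈ Θ := hΘc.sSup_mem hΘ.nonempty
  have hgap : β - α < Real.pi := by
    by_contra! h
    obtain ⟨c₁, hc₁, hc₁α⟩ := hα
    obtain ⟨c₂, hc₂, hc₂α⟩ : α + Real.pi ∈ Θ :=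
      hΘ.isPreconnected.Icc_subset ⟨c₁, hc₁, hc₁α⟩ hβ ⟨by linarith [Real.pi_pos], by linarith⟩
    have : arg (c₂ / c₁) = Real.pi := by
      have h := arg_div_coe_angle (div_ne_zero (hC0 c₂ hc₂) (hC0 a ha))
        (div_ne_zero (hC0 c₁ hc₁) (hC0 a ha))
      rw [div_div_div_cancel_right₀ (hC0 a ha)] at h
      simp only at hc₁α hc₂α
      rw [hc₁α, hc₂α, ← Real.Angle.coe_sub, add_sub_cancel_left, ← arg_neg_one] at h
      rw [arg_coe_angle_eq_iff.mp h, arg_neg_one]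
    exact (mem_slitPlane_iff_arg.mp (hslit c₁ hc₁ c₂ hc₂)).1 this
  refine ⟨exp (-(((α + β) / 2 : ℝ) * I)) / a, fun c hc => ?_⟩
  have hψ : arg (c / a) ∈ Icc α β :=
    ⟨csInf_le hΘc.bddBelow ⟨c, hc, rfl⟩, le_csSup hΘc.bddAbove ⟨c, hc, rfl⟩⟩
  have hcd : c * (exp (-(((α + β) / 2 : ℝ) * I)) / a)
      = ‖c / a‖ * exp ((arg (c / a) - (α + β) / 2 : ℝ) * I) :=
    calc c * (exp (-(((α + β) / 2 : ℝ) * I)) / a)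
        = ‖c / a‖ * exp (arg (c / a) * I) * exp (-(((α + β) / 2 : ℝ) * I)) := by
          rw [norm_mul_exp_arg_mul_I]; ring
      _ = _ := by rw [mul_assoc, ← exp_add]; push_cast; ring_nf
  rw [hcd, re_ofReal_mul, exp_ofReal_mul_I_re]
  refine mul_pos (norm_pos_iff.mpr (div_ne_zero (hC0 c hc) (hC0 a ha))) ?_
  exact Real.cos_pos_of_mem_Ioo ⟨by linarith [hψ.1, hψ.2], by linarith [hψ.1, hψ.2]⟩

namespace QuadraticForm

variable {V : Type*} [NormedAddCommGroup V] [NormedSpace ℝ V] {P Q : QuadraticForm ℝ V}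

theorem exists_posDef_smul_add_smul (hP : Continuous P) (hQ : Continuous Q)
    (hPQ : JointlyAnisotropic P Q) (hV : 3 ≤ finrank ℝ V) :
    ∃ μ σ : ℝ, (μ • P + σ • Q).PosDef := by
  have : FiniteDimensional ℝ V := Module.finite_of_finrank_pos (by omega)
  set F : V → ℂ := fun v => ⟨P v, Q v⟩
  have hF : Continuous F := Complex.equivRealProdCLM.symm.continuous.comp (hP.prodMk hQ)
  have hS : ∀ u ∈ Metric.sphere (0 : V) 1, u ≠ 0 := by
    rintro u hu rfl
    simp at hu
  have hrank : 1 < Module.rank ℝ V := by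
    rw [← Module.finrank_eq_rank]
    exact_mod_cast (by omega : 1 < finrank ℝ V)
  obtain ⟨d, hd⟩ := Complex.exists_forall_re_mul_pos_s9 ((isCompact_sphere 0 1).image hF)
    ((isConnected_sphere hrank 0 zero_le_one).image F hF.continuousOn)
    (by
      rintro _ ⟨u₁, hu₁, rfl⟩ _ ⟨u₂, hu₂, rfl⟩
      exact div_mem_slitPlane hPQ hV (hS u₁ hu₁) (hS u₂ hu₂))
  refine ⟨d.re, -d.im, fun v hv => ?_⟩
  have hd' := hd _ ⟨‖v‖⁻¹ • v, by simp [norm_smul, hv], rfl⟩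
  simp only [F, QuadraticMap.map_smul, smul_eq_mul, Complex.mul_re] at hd'
  refine pos_of_mul_pos_right (a := ‖v‖⁻¹ * ‖v‖⁻¹) ?_ (mul_self_nonneg _)
  simp only [_root_.add_apply, _root_.smul_apply, smul_eq_mul]
  linear_combination hd'

end QuadraticForm

namespace Matrix

variable {ι R : Type*} [Fintype ι] [CommSemiring R]

theorem IsSymm.dotProduct_mulVec_add {M : Matrix ι ι R} (hM : M.IsSymm) {k : ι → R}
    (hk : M *ᵥ k = 0) (w : ι → R) : (k + w) ⬝ᵥ M *ᵥ (k + w) = w ⬝ᵥ M *ᵥ w := by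
  have hkM : k ᵥ* M = 0 := by rw [← hM.eq, vecMul_transpose, hk]
  rw [mulVec_add, hk, zero_add, add_dotProduct, dotProduct_mulVec, hkM, zero_dotProduct,
    zero_add]

variable {M : Matrix ι ι ℝ} {K W : Submodule ℝ (ι → ℝ)}

theorem posSemidef_of_isCompl (hM : M.IsSymm) (hKW : IsCompl K W) (hK : ∀ k ∈ K, M *ᵥ k = 0)
    (hW : ∀ w ∈ W, w ≠ 0 → 0 < w ⬝ᵥ M *ᵥ w) : M.PosSemidef := by
  refine posSemidef_iff_dotProduct_mulVec.mpr ⟨isHermitian_iff_isSelfAdjoint.mpr hM, fun x => ?_⟩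
  obtain ⟨k, hk, w, hw, rfl⟩ := Submodule.mem_sup.mp (hKW.sup_eq_top ▸ Submodule.mem_top (x := x))
  rw [star_trivial, hM.dotProduct_mulVec_add (hK k hk)]
  rcases eq_or_ne w 0 with rfl | hw0
  · simp
  · exact (hW w hw hw0).le

theorem mulVec_eq_zero_iff_of_isCompl (hM : M.IsSymm) (hKW : IsCompl K W)
    (hK : ∀ k ∈ K, M *ᵥ k = 0) (hW : ∀ w ∈ W, w ≠ 0 → 0 < w ⬝ᵥ M *ᵥ w) (x : ι → ℝ) :
    M *ᵥ x = 0 ↔ x ∈ K := by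
  refine ⟨fun hx => ?_, hK x⟩
  obtain ⟨k, hk, w, hw, rfl⟩ := Submodule.mem_sup.mp (hKW.sup_eq_top ▸ Submodule.mem_top (x := x))
  have hw0 : w = 0 := by
    by_contra hw0
    have := hW w hw hw0
    rw [← hM.dotProduct_mulVec_add (hK k hk), hx, dotProduct_zero] at this
    exact this.false
  rwa [hw0, add_zero]

variable [DecidableEq ι] {A B : Matrix ι ι ℝ}

theorem exists_forall_dotProduct_smul_add_smul_mulVec_pos (hW : 3 ≤ finrank ℝ W)
    (hAB : ∀ w ∈ W, w ⬝ᵥ A *ᵥ w = 0 → w ⬝ᵥ B *ᵥ w = 0 → w = 0) :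
    ∃ μ σ : ℝ, ∀ w ∈ W, w ≠ 0 → 0 < w ⬝ᵥ (μ • A + σ • B) *ᵥ w := by
  have hform (M : Matrix ι ι ℝ) :
      ⇑(M.toQuadraticForm'.comp W.subtype) = fun w : W => (w : ι → ℝ) ⬝ᵥ M *ᵥ w :=
    funext fun w => toLinearMap₂'_apply' M _ _
  obtain ⟨μ, σ, hpos⟩ := QuadraticForm.exists_posDef_smul_add_smul
    (P := A.toQuadraticForm'.comp W.subtype) (Q := B.toQuadraticForm'.comp W.subtype)
    (by rw [hform]; fun_prop) (by rw [hform]; fun_prop)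
    (fun w hAw hBw => by
      simp only [hform] at hAw hBw
      exact Subtype.ext (hAB w w.2 hAw hBw))
    hW
  refine ⟨μ, σ, fun w hw hw0 => ?_⟩
  have := hpos ⟨w, hw⟩ (by simpa using hw0)
  simp only [_root_.add_apply, _root_.smul_apply, hform, smul_eq_mul] at this
  simpa [add_mulVec, smul_mulVec] using this

end Matrix

/-- if `Q(A) ∩ Q(B) = N(A) ∩ N(B)` and `dim(N(A) ∩ N(B)) ≤ n − 3`, then
there is `(μ, σ) ≠ (0, 0)` with `μA + σB ≽ 0` and `N(μA + σB) = N(A) ∩ N(B)`. -/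
theorem stmt_9 {n : ℕ} (A B : Matrix (Fin n) (Fin n) ℝ)
    (hA : A.IsSymm) (hB : B.IsSymm)
    (hQN : ∀ v : Fin n → ℝ,
      (v ⬝ᵥ A *ᵥ v = 0 ∧ v ⬝ᵥ B *ᵥ v = 0) ↔ (A *ᵥ v = 0 ∧ B *ᵥ v = 0))
    (hdim : Module.finrank ℝ
      ↥(LinearMap.ker A.mulVecLin ⊓ LinearMap.ker B.mulVecLin) + 3 ≤ n) :
    ∃ μ σ : ℝ, (μ, σ) ≠ (0, 0) ∧ (μ • A + σ • B).PosSemidef ∧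
      ∀ x : Fin n → ℝ, (μ • A + σ • B) *ᵥ x = 0 ↔ (A *ᵥ x = 0 ∧ B *ᵥ x = 0) := by
  set K := LinearMap.ker A.mulVecLin ⊓ LinearMap.ker B.mulVecLin
  have hK (v : Fin n → ℝ) : v ∈ K ↔ A *ᵥ v = 0 ∧ B *ᵥ v = 0 := by simp [K]
  obtain ⟨W, hKW⟩ := K.exists_isCompl
  have hW : 3 ≤ finrank ℝ W := by
    have := Submodule.finrank_add_eq_of_isCompl hKW
    rw [Module.finrank_fin_fun] at this
    omega
  obtain ⟨μ, σ, hMW⟩ := Matrix.exists_forall_dotProduct_smul_add_smul_mulVec_pos hW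
    fun w hw hAw hBw =>
      Submodule.disjoint_def.mp hKW.disjoint w ((hK w).mpr ((hQN w).mp ⟨hAw, hBw⟩)) hw
  have hMK : ∀ k ∈ K, (μ • A + σ • B) *ᵥ k = 0 := fun k hk => by
    simp [add_mulVec, smul_mulVec, ((hK k).mp hk).1, ((hK k).mp hk).2]
  have hM : (μ • A + σ • B).IsSymm := (hA.smul μ).add (hB.smul σ)
  have : Nontrivial W := Module.nontrivial_of_finrank_pos (R := ℝ) (by omega)
  obtain ⟨⟨w, hw⟩, hw0⟩ := exists_ne (0 : W)
  refine ⟨μ, σ, fun h => ?_, Matrix.posSemidef_of_isCompl hM hKW hMK hMW,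
    fun x => (Matrix.mulVec_eq_zero_iff_of_isCompl hM hKW hMK hMW x).trans (hK x)⟩
  rw [Prod.mk.injEq] at h
  simpa [h.1, h.2] using hMW w hw (by simpa using hw0)
end

section
/- Consider (QP1QC) with data A, B, f, g, μ. Assume the primal Slater condition holds, assume F is bounded below on the feasible set {x : G(x) ≤ μ}, and assume there exist σ₁ ≠ σ₂ in ℝ such that A + σ₁B and A + σ₂B are both positive semidefinite. Then the infimum of F over the feasible set is attained, i.e., there exists x* with G(x*) ≤ μ and F(x*) = inf{F(x) : G(x) ≤ μ}. -/
/-!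
For each `k` take a point of least Euclidean norm among the feasible points at which `F` is within
`1/(k+1)` of its infimum. If these points stay bounded, a limit point is a minimizer. Otherwise
their directions accumulate at a unit vector `v` with `vᵀAv ≤ 0` and `vᵀBv ≤ 0`.

If `vᵀBv < 0`, moving along `±v` reaches the feasible set without increasing `F`, so `F` is bounded
below on all of `ℝⁿ`; its unconstrained minimizer (which exists by the same least-norm argument
without constraint), pushed into the feasible set, is a constrained one. If `vᵀBv = 0`, the
semidefiniteness of `A + σ₁B` and `A + σ₂B` forces `Av = Bv = 0`, so `F` and `G` are affine along
`v`. Then either `F` is unbounded below on a feasible ray; or both are constant along `v`, and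
removing the `v`-component of the least-norm point contradicts its minimality; or a Lagrangian
`F + ν(G - μ)` with `ν ≥ 0` is constant along `v`, and its unconstrained minimizer, moved onto
`G = μ`, solves the problem.
-/

open Matrix Filter Topology Set

variable {ι : Type*} [Fintype ι]

noncomputable def quadFun (M : Matrix ι ι ℝ) (c x : ι → ℝ) : ℝ :=
  x ⬝ᵥ M *ᵥ x - 2 * (c ⬝ᵥ x)

theorem continuous_quadFun (M : Matrix ι ι ℝ) (c : ι → ℝ) : Continuous (quadFun M c) :=
  (continuous_id.dotProduct (continuous_const.matrix_mulVec continuous_id)).sub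
    (continuous_const.mul (continuous_const.dotProduct continuous_id))

theorem quadFun_smul (M : Matrix ι ι ℝ) (c x : ι → ℝ) (t : ℝ) :
    quadFun M c (t • x) = t ^ 2 * (x ⬝ᵥ M *ᵥ x) - 2 * t * (c ⬝ᵥ x) := by
  simp only [quadFun, mulVec_smul, dotProduct_smul, smul_dotProduct, smul_eq_mul]
  ring

theorem quadFun_add_smul {M : Matrix ι ι ℝ} (hM : M.IsSymm) (c x v : ι → ℝ) (t : ℝ) :
    quadFun M c (x + t • v) =
      quadFun M c x + 2 * t * ((M *ᵥ v) ⬝ᵥ x - c ⬝ᵥ v) + t ^ 2 * (v ⬝ᵥ M *ᵥ v) := by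
  have hvx : v ⬝ᵥ M *ᵥ x = (M *ᵥ v) ⬝ᵥ x := by
    rw [dotProduct_mulVec, ← mulVec_transpose, hM]
  simp only [quadFun, mulVec_add, mulVec_smul, dotProduct_add, add_dotProduct, dotProduct_smul,
    smul_dotProduct, smul_eq_mul, hvx, dotProduct_comm x (M *ᵥ v)]
  ring

theorem quadFun_add_smul_of_mulVec_eq_zero {M : Matrix ι ι ℝ} (hM : M.IsSymm) {v : ι → ℝ}
    (hv : M *ᵥ v = 0) (c x : ι → ℝ) (t : ℝ) :
    quadFun M c (x + t • v) = quadFun M c x - 2 * t * (c ⬝ᵥ v) := by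
  rw [quadFun_add_smul hM, hv]
  simp only [zero_dotProduct, dotProduct_zero]
  ring

theorem quadFun_add_smul_matrix (A B : Matrix ι ι ℝ) (f g : ι → ℝ) (ν : ℝ) (x : ι → ℝ) :
    quadFun (A + ν • B) (f + ν • g) x = quadFun A f x + ν * quadFun B g x := by
  simp only [quadFun, add_mulVec, smul_mulVec, dotProduct_add, add_dotProduct, dotProduct_smul,
    smul_dotProduct, smul_eq_mul]
  ring

theorem tendsto_quadratic_atBot {c₂ : ℝ} (hc : c₂ < 0) (c₀ c₁ : ℝ) :
    Tendsto (fun t => c₀ + c₁ * t + c₂ * t ^ 2) atTop atBot := by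
  have h : Tendsto (fun t => t * (c₁ + c₂ * t)) atTop atBot :=
    tendsto_id.atTop_mul_atBot₀
      (tendsto_atBot_add_const_left _ c₁ (tendsto_id.const_mul_atTop_of_neg hc))
  exact (tendsto_atBot_add_const_left _ c₀ h).congr fun t => by ring

theorem not_bddBelow_image_of_tendsto_atBot {α β : Type*} {l : Filter β} [l.NeBot]
    {F : α → ℝ} {S : Set α} {φ : β → α} (hφ : ∀ᶠ t in l, φ t ∈ S)
    (hF : Tendsto (fun t => F (φ t)) l atBot) : ¬BddBelow (F '' S) := by
  rintro ⟨m, hm⟩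
  obtain ⟨t, ht, hlt⟩ := (hφ.and (hF.eventually_lt_atBot m)).exists
  exact (hm ⟨φ t, ht, rfl⟩).not_gt hlt

theorem norm_le_sqrt_dotProduct_self (x : ι → ℝ) : ‖x‖ ≤ √(x ⬝ᵥ x) := by
  refine (pi_norm_le_iff_of_nonneg (Real.sqrt_nonneg _)).2 fun i => ?_
  rw [Real.norm_eq_abs, ← Real.sqrt_sq_eq_abs, sq]
  exact Real.sqrt_le_sqrt (Finset.single_le_sum (f := fun j => x j * x j)
    (fun j _ => mul_self_nonneg _) (Finset.mem_univ i))

theorem continuous_dotProduct_self : Continuous fun x : ι → ℝ => x ⬝ᵥ x :=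
  continuous_id.dotProduct continuous_id

theorem isCompact_setOf_dotProduct_self_le (R : ℝ) : IsCompact {x : ι → ℝ | x ⬝ᵥ x ≤ R} :=
  (isCompact_closedBall 0 √R).of_isClosed_subset
    (isClosed_le continuous_dotProduct_self continuous_const) fun x hx =>
      mem_closedBall_zero_iff.2 ((norm_le_sqrt_dotProduct_self x).trans (Real.sqrt_le_sqrt hx))

theorem exists_isMinOn_dotProduct_self {C : Set (ι → ℝ)} (hC : IsClosed C) (hne : C.Nonempty) :
    ∃ x ∈ C, IsMinOn (fun y => y ⬝ᵥ y) C x := by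
  obtain ⟨y₀, hy₀⟩ := hne
  obtain ⟨x, ⟨hxC, -⟩, hmin⟩ :=
    ((isCompact_setOf_dotProduct_self_le (y₀ ⬝ᵥ y₀)).inter_left hC).exists_isMinOn
      ⟨y₀, hy₀, le_refl (y₀ ⬝ᵥ y₀)⟩ continuous_dotProduct_self.continuousOn
  refine ⟨x, hxC, isMinOn_iff.2 fun y hy => ?_⟩
  rcases le_total (y ⬝ᵥ y) (y₀ ⬝ᵥ y₀) with h | h
  · exact hmin ⟨hy, h⟩
  · exact (hmin ⟨hy₀, le_refl (y₀ ⬝ᵥ y₀)⟩).trans h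

theorem sub_smul_notMem_of_isMinOn {T : Set (ι → ℝ)} {x v : ι → ℝ}
    (hx : IsMinOn (fun y => y ⬝ᵥ y) T x) (hv : v ⬝ᵥ v = 1) (hxv : x ⬝ᵥ v ≠ 0) :
    x - (x ⬝ᵥ v) • v ∉ T := by
  intro hT
  have h := isMinOn_iff.1 hx _ hT
  simp only [sub_dotProduct, dotProduct_sub, smul_dotProduct, dotProduct_smul, smul_eq_mul, hv,
    dotProduct_comm v x] at h
  nlinarith [sq_pos_of_ne_zero hxv]

def IsAsymptoticDir (S : Set (ι → ℝ)) (v : ι → ℝ) : Prop :=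
  ∃ (r : ℕ → ℝ) (u : ℕ → ι → ℝ),
    Tendsto r atTop atTop ∧ Tendsto u atTop (𝓝 v) ∧ ∀ᶠ j in atTop, r j • u j ∈ S

theorem IsAsymptoticDir.dotProduct_mulVec_nonpos {S : Set (ι → ℝ)} {v : ι → ℝ}
    (h : IsAsymptoticDir S v) {M : Matrix ι ι ℝ} {c : ι → ℝ} {β : ℝ}
    (hS : ∀ x ∈ S, quadFun M c x ≤ β) : v ⬝ᵥ M *ᵥ v ≤ 0 := by
  obtain ⟨r, u, hr, hu, hru⟩ := h
  have hr' := hr.inv_tendsto_atTop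
  have hform : Tendsto (fun j => u j ⬝ᵥ M *ᵥ u j) atTop (𝓝 (v ⬝ᵥ M *ᵥ v)) :=
    ((continuous_id.dotProduct (continuous_const.matrix_mulVec continuous_id)).tendsto v).comp hu
  have hlin : Tendsto (fun j => c ⬝ᵥ u j) atTop (𝓝 (c ⬝ᵥ v)) :=
    ((continuous_const.dotProduct continuous_id).tendsto v).comp hu
  have hlim : Tendsto (fun j => u j ⬝ᵥ M *ᵥ u j - 2 * (c ⬝ᵥ u j) * (r j)⁻¹ - β * (r j)⁻¹ ^ 2)
      atTop (𝓝 (v ⬝ᵥ M *ᵥ v - 2 * (c ⬝ᵥ v) * 0 - β * 0 ^ 2)) :=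
    (hform.sub ((hlin.const_mul 2).mul hr')).sub (tendsto_const_nhds.mul (hr'.pow 2))
  simp only [mul_zero, sub_zero, zero_pow two_ne_zero] at hlim
  refine le_of_tendsto hlim ?_
  filter_upwards [hru, hr.eventually_gt_atTop 0] with j hj hrj
  -- this is `quadFun M c (r • u) - β ≤ 0` divided by `r ^ 2`
  have h := hS _ hj
  rw [quadFun_smul] at h
  have : u j ⬝ᵥ M *ᵥ u j - 2 * (c ⬝ᵥ u j) * (r j)⁻¹ - β * (r j)⁻¹ ^ 2
      = (r j)⁻¹ ^ 2 * (r j ^ 2 * (u j ⬝ᵥ M *ᵥ u j) - 2 * r j * (c ⬝ᵥ u j) - β) := by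
    field_simp
  rw [this]
  exact mul_nonpos_of_nonneg_of_nonpos (by positivity) (by linarith)

theorem tendsto_dotProduct_self_atTop_of_iInter_eq_empty {T : ℕ → Set (ι → ℝ)}
    (hT : ∀ k, IsClosed (T k)) (hanti : Antitone T) (hempty : ⋂ k, T k = ∅) {x : ℕ → ι → ℝ}
    (hxT : ∀ k, x k ∈ T k) (hxmin : ∀ k, IsMinOn (fun y => y ⬝ᵥ y) (T k) (x k)) :
    Tendsto (fun k => x k ⬝ᵥ x k) atTop atTop := by
  refine tendsto_atTop_atTop_of_monotone' (monotone_nat_of_le_succ fun k =>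
    isMinOn_iff.1 (hxmin k) _ (hanti k.le_succ (hxT (k + 1)))) ?_
  rintro ⟨R, hR⟩
  obtain ⟨y, hy⟩ := IsCompact.nonempty_iInter_of_sequence_nonempty_isCompact_isClosed
    (fun k => T k ∩ {y | y ⬝ᵥ y ≤ R}) (fun k => inter_subset_inter_left _ (hanti k.le_succ))
    (fun k => ⟨x k, hxT k, hR ⟨k, rfl⟩⟩)
    ((isCompact_setOf_dotProduct_self_le R).inter_left (hT 0))
    (fun k => (hT k).inter (isClosed_le continuous_dotProduct_self continuous_const))
  exact eq_empty_iff_forall_notMem.1 hempty y (mem_iInter.2 fun k => (mem_iInter.1 hy k).1)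

theorem exists_asymptoticDir_of_iInter_eq_empty {T : ℕ → Set (ι → ℝ)} (hT : ∀ k, IsClosed (T k))
    (hne : ∀ k, (T k).Nonempty) (hanti : Antitone T) (hempty : ⋂ k, T k = ∅) :
    ∃ v, v ⬝ᵥ v = 1 ∧ IsAsymptoticDir (T 0) v ∧
      ∃ k, ∃ x ∈ T k, IsMinOn (fun y => y ⬝ᵥ y) (T k) x ∧ 0 < x ⬝ᵥ v := by
  choose x hxT hxmin using fun k => exists_isMinOn_dotProduct_self (hT k) (hne k)
  set N := fun k => x k ⬝ᵥ x k
  have hN : Tendsto N atTop atTop :=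
    tendsto_dotProduct_self_atTop_of_iInter_eq_empty hT hanti hempty hxT hxmin
  set r := fun k => √(N k) with hr_def
  set u := fun k => (r k)⁻¹ • x k with hu_def
  have hpos : ∀ᶠ k in atTop, 0 < N k := hN.eventually_gt_atTop 0
  have hxu : ∀ᶠ k in atTop, r k • u k = x k :=
    hpos.mono fun k hk => smul_inv_smul₀ (Real.sqrt_pos.2 hk).ne' _
  have hu1 : ∀ᶠ k in atTop, u k ⬝ᵥ u k = 1 := hpos.mono fun k hk => by
    simp only [hu_def, hr_def, smul_dotProduct, dotProduct_smul, smul_eq_mul]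
    rw [← mul_assoc, ← mul_inv, Real.mul_self_sqrt hk.le]
    exact inv_mul_cancel₀ hk.ne'
  have hsphere : IsCompact {y : ι → ℝ | y ⬝ᵥ y = 1} :=
    (isCompact_setOf_dotProduct_self_le 1).of_isClosed_subset
      (isClosed_eq continuous_dotProduct_self continuous_const) fun y hy => hy.le
  obtain ⟨v, hv, φ, hφ, huv⟩ := hsphere.tendsto_subseq' hu1.frequently
  have hφ' := hφ.tendsto_atTop
  have huv_pos : ∀ᶠ j in atTop, 0 < u (φ j) ⬝ᵥ v := by
    have h : Tendsto (fun j => u (φ j) ⬝ᵥ v) atTop (𝓝 (v ⬝ᵥ v)) :=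
      ((continuous_id.dotProduct continuous_const).tendsto v).comp huv
    exact h.eventually (lt_mem_nhds (by rw [show v ⬝ᵥ v = 1 from hv]; exact one_pos))
  refine ⟨v, hv, ⟨r ∘ φ, u ∘ φ, (Real.tendsto_sqrt_atTop.comp hN).comp hφ', huv, ?_⟩, ?_⟩
  · filter_upwards [hφ'.eventually hxu] with j hj
    simp only [Function.comp_apply, hj]
    exact hanti (Nat.zero_le _) (hxT _)
  · obtain ⟨j, hj, hNj, hxj⟩ :=
      (huv_pos.and ((hφ'.eventually hpos).and (hφ'.eventually hxu))).exists
    refine ⟨φ j, x (φ j), hxT _, hxmin _, ?_⟩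
    rw [← hxj, smul_dotProduct, smul_eq_mul]
    exact mul_pos (Real.sqrt_pos.2 hNj) hj

theorem exists_asymptoticDir_of_not_exists_isMinOn {S : Set (ι → ℝ)} {F : (ι → ℝ) → ℝ}
    (hS : IsClosed S) (hF : Continuous F) (hne : S.Nonempty) (hbdd : BddBelow (F '' S))
    (hmin : ¬∃ x ∈ S, IsMinOn F S x) :
    ∃ v, v ⬝ᵥ v = 1 ∧ (∃ β, IsAsymptoticDir (S ∩ F ⁻¹' Iic β) v) ∧
      ∃ β, ∃ x ∈ S ∩ F ⁻¹' Iic β, IsMinOn (fun y => y ⬝ᵥ y) (S ∩ F ⁻¹' Iic β) x ∧ 0 < x ⬝ᵥ v := by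
  set m := sInf (F '' S)
  set T := fun k : ℕ => S ∩ F ⁻¹' Iic (m + 1 / (k + 1))
  have hne : ∀ k, (T k).Nonempty := fun k => by
    obtain ⟨_, ⟨y, hy, rfl⟩, hlt⟩ := exists_lt_of_csInf_lt (hne.image F)
      (lt_add_of_pos_right m (by positivity : (0 : ℝ) < 1 / (k + 1)))
    exact ⟨y, hy, hlt.le⟩
  have hanti : Antitone T := fun k l hkl =>
    inter_subset_inter_right _ (preimage_mono (Iic_subset_Iic.2 (by gcongr)))
  have hempty : ⋂ k, T k = ∅ := by
    refine eq_empty_iff_forall_notMem.2 fun y hy => hmin ⟨y, (mem_iInter.1 hy 0).1,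
      isMinOn_iff.2 fun z hz => le_trans ?_ (csInf_le hbdd ⟨z, hz, rfl⟩)⟩
    refine le_of_forall_pos_le_add fun ε hε => ?_
    obtain ⟨k, hk⟩ := exists_nat_one_div_lt hε
    exact (mem_iInter.1 hy k).2.trans (by linarith)
  obtain ⟨v, hv, hdir, k, x, hx, hxmin, hxv⟩ := exists_asymptoticDir_of_iInter_eq_empty
    (fun k => hS.inter (isClosed_Iic.preimage hF)) hne hanti hempty
  exact ⟨v, hv, ⟨_, hdir⟩, _, x, hx, hxmin, hxv⟩

theorem Matrix.PosSemidef.mulVec_eq_zero_of_dotProduct_mulVec_nonpos {M : Matrix ι ι ℝ}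
    (hM : M.PosSemidef) {v : ι → ℝ} (hv : v ⬝ᵥ M *ᵥ v ≤ 0) : M *ᵥ v = 0 :=
  (hM.dotProduct_mulVec_zero_iff v).1 <| by
    simpa using le_antisymm hv (by simpa using hM.dotProduct_mulVec_nonneg v)

theorem mulVec_eq_zero_of_posSemidef_add_smul {A B : Matrix ι ι ℝ} {σ₁ σ₂ : ℝ}
    (h₁ : (A + σ₁ • B).PosSemidef) (h₂ : (A + σ₂ • B).PosSemidef) (hne : σ₁ ≠ σ₂) {v : ι → ℝ}
    (hAv : v ⬝ᵥ A *ᵥ v ≤ 0) (hBv : v ⬝ᵥ B *ᵥ v = 0) : A *ᵥ v = 0 ∧ B *ᵥ v = 0 := by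
  have hker : ∀ σ : ℝ, (A + σ • B).PosSemidef → A *ᵥ v + σ • B *ᵥ v = 0 := fun σ h => by
    rw [← smul_mulVec, ← add_mulVec]
    refine h.mulVec_eq_zero_of_dotProduct_mulVec_nonpos ?_
    simpa [add_mulVec, smul_mulVec, hBv] using hAv
  have h₁' := hker σ₁ h₁
  have hB : B *ᵥ v = 0 := by
    have h : (σ₁ - σ₂) • B *ᵥ v = 0 := by
      rw [sub_smul, ← add_sub_add_left_eq_sub _ _ (A *ᵥ v), h₁', hker σ₂ h₂, sub_zero]
    exact (smul_eq_zero.1 h).resolve_left (sub_ne_zero.2 hne)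
  exact ⟨by simpa [hB] using h₁', hB⟩

theorem posSemidef_of_bddBelow_quadFun {M : Matrix ι ι ℝ} (hM : M.IsSymm) {c : ι → ℝ}
    (hbdd : BddBelow (range (quadFun M c))) : M.PosSemidef := by
  refine posSemidef_iff_dotProduct_mulVec.2 ⟨isHermitian_iff_isSymm.2 hM, fun w => ?_⟩
  by_contra! hw
  rw [star_trivial] at hw
  rw [← image_univ] at hbdd
  refine not_bddBelow_image_of_tendsto_atBot (l := atTop) (φ := fun t : ℝ => t • w)
    (Eventually.of_forall fun _ => mem_univ _) ?_ hbdd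
  exact (tendsto_quadratic_atBot hw 0 (-2 * (c ⬝ᵥ w))).congr fun t => by
    rw [quadFun_smul]; ring

theorem not_bddBelow_of_mulVec_eq_zero {A : Matrix ι ι ℝ} (hA : A.IsSymm) {f v x : ι → ℝ}
    (hAv : A *ᵥ v = 0) (hfv : f ⬝ᵥ v ≠ 0) {S : Set (ι → ℝ)}
    (hray : ∀ᶠ s in atTop, x + (s * (f ⬝ᵥ v)) • v ∈ S) : ¬BddBelow (quadFun A f '' S) := by
  refine not_bddBelow_image_of_tendsto_atBot hray ?_
  have h : -(2 * (f ⬝ᵥ v) ^ 2) < 0 := neg_neg_of_pos (by positivity)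
  refine (tendsto_atBot_add_const_left _ (quadFun A f x)
    (tendsto_id.const_mul_atTop_of_neg h)).congr fun s => ?_
  rw [quadFun_add_smul_of_mulVec_eq_zero hA hAv, id]
  ring

theorem false_of_isMinOn_dotProduct_self {A : Matrix ι ι ℝ} (hA : A.IsSymm) {f v : ι → ℝ}
    (hAv : A *ᵥ v = 0) (hv : v ⬝ᵥ v = 1) {S : Set (ι → ℝ)} (hS : ∀ y ∈ S, ∀ t : ℝ, y + t • v ∈ S)
    (hbdd : BddBelow (quadFun A f '' S)) {β : ℝ} {x : ι → ℝ}
    (hx : x ∈ S ∩ quadFun A f ⁻¹' Iic β)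
    (hxmin : IsMinOn (fun y => y ⬝ᵥ y) (S ∩ quadFun A f ⁻¹' Iic β) x) (hxv : 0 < x ⬝ᵥ v) :
    False := by
  by_cases hfv : f ⬝ᵥ v = 0
  · refine sub_smul_notMem_of_isMinOn hxmin hv hxv.ne' ?_
    rw [sub_eq_add_neg, ← neg_smul]
    refine ⟨hS x hx.1 _, ?_⟩
    rw [mem_preimage, quadFun_add_smul_of_mulVec_eq_zero hA hAv, hfv, mul_zero, sub_zero]
    exact hx.2
  · exact not_bddBelow_of_mulVec_eq_zero hA hAv hfv
      (Eventually.of_forall fun _ => hS x hx.1 _) hbdd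

theorem exists_forall_quadFun_le {M : Matrix ι ι ℝ} (hM : M.IsSymm) {c : ι → ℝ}
    (hbdd : BddBelow (range (quadFun M c))) : ∃ x, ∀ y, quadFun M c x ≤ quadFun M c y := by
  by_contra hnot
  have hbdd' : BddBelow (quadFun M c '' univ) := by rwa [image_univ]
  obtain ⟨v, hv, ⟨β, hdir⟩, β', x, hx, hxmin, hxv⟩ :=
    exists_asymptoticDir_of_not_exists_isMinOn isClosed_univ (continuous_quadFun M c)
      univ_nonempty hbdd' fun ⟨x, _, hx⟩ => hnot ⟨x, fun y => isMinOn_iff.1 hx y (mem_univ y)⟩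
  have hMv : M *ᵥ v = 0 :=
    (posSemidef_of_bddBelow_quadFun hM hbdd).mulVec_eq_zero_of_dotProduct_mulVec_nonpos
      (hdir.dotProduct_mulVec_nonpos fun y hy => hy.2)
  exact false_of_isMinOn_dotProduct_self hM hMv hv (fun _ _ _ => mem_univ _) hbdd' hx hxmin hxv

section Constrained

variable {A B : Matrix ι ι ℝ} {f g : ι → ℝ} {μ : ℝ}

theorem exists_isMinOn_of_forall_exists_le_lagrangian (hA : A.IsSymm) (hB : B.IsSymm) {ν : ℝ}
    (hν : 0 ≤ ν) (hbdd : BddBelow (quadFun A f '' {x | quadFun B g x ≤ μ}))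
    (h : ∀ x, ∃ y, quadFun B g y ≤ μ ∧ quadFun A f y ≤ quadFun A f x + ν * (quadFun B g x - μ)) :
    ∃ xs ∈ {x | quadFun B g x ≤ μ}, IsMinOn (quadFun A f) {x | quadFun B g x ≤ μ} xs := by
  obtain ⟨m, hm⟩ := hbdd
  have hL := quadFun_add_smul_matrix A B f g ν
  obtain ⟨xh, hxh⟩ := exists_forall_quadFun_le (hA.add (hB.smul ν)) (c := f + ν • g)
    ⟨m + ν * μ, by
      rintro _ ⟨x, rfl⟩
      obtain ⟨y, hy, hFy⟩ := h x
      have := hm ⟨y, hy, rfl⟩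
      rw [hL]
      linear_combination this + hFy⟩
  obtain ⟨y, hy, hFy⟩ := h xh
  refine ⟨y, hy, isMinOn_iff.2 fun x hx => ?_⟩
  have hLx := hxh x
  rw [hL, hL] at hLx
  linear_combination hFy + hLx + mul_nonneg hν (sub_nonneg.2 (show quadFun B g x ≤ μ from hx))

theorem exists_le_of_dotProduct_mulVec_neg (hA : A.IsSymm) (hB : B.IsSymm) {w x : ι → ℝ}
    (hAw : w ⬝ᵥ A *ᵥ w ≤ 0) (hBw : w ⬝ᵥ B *ᵥ w < 0) (hx : (A *ᵥ w) ⬝ᵥ x - f ⬝ᵥ w ≤ 0) :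
    ∃ y, quadFun B g y ≤ μ ∧ quadFun A f y ≤ quadFun A f x := by
  have hG : Tendsto (fun t => quadFun B g (x + t • w)) atTop atBot :=
    (tendsto_quadratic_atBot hBw (quadFun B g x) (2 * ((B *ᵥ w) ⬝ᵥ x - g ⬝ᵥ w))).congr fun t => by
      rw [quadFun_add_smul hB]; ring
  obtain ⟨t, ht, hGt⟩ := ((eventually_ge_atTop 0).and (hG.eventually_le_atBot μ)).exists
  refine ⟨x + t • w, hGt, ?_⟩
  rw [quadFun_add_smul hA]
  nlinarith [mul_nonpos_of_nonneg_of_nonpos ht hx, mul_nonpos_of_nonneg_of_nonpos (sq_nonneg t) hAw]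

theorem exists_isMinOn_of_dotProduct_mulVec_neg (hA : A.IsSymm) (hB : B.IsSymm) {v : ι → ℝ}
    (hAv : v ⬝ᵥ A *ᵥ v ≤ 0) (hBv : v ⬝ᵥ B *ᵥ v < 0)
    (hbdd : BddBelow (quadFun A f '' {x | quadFun B g x ≤ μ})) :
    ∃ xs ∈ {x | quadFun B g x ≤ μ}, IsMinOn (quadFun A f) {x | quadFun B g x ≤ μ} xs := by
  refine exists_isMinOn_of_forall_exists_le_lagrangian hA hB le_rfl hbdd fun x => ?_
  simp only [zero_mul, add_zero]
  rcases le_total ((A *ᵥ v) ⬝ᵥ x - f ⬝ᵥ v) 0 with h | h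
  · exact exists_le_of_dotProduct_mulVec_neg hA hB hAv hBv h
  · refine exists_le_of_dotProduct_mulVec_neg hA hB (w := -v)
      (by rwa [mulVec_neg, dotProduct_neg, neg_dotProduct, neg_neg])
      (by rwa [mulVec_neg, dotProduct_neg, neg_dotProduct, neg_neg]) ?_
    rw [mulVec_neg, neg_dotProduct, dotProduct_neg]
    linarith

theorem exists_isMinOn_of_mulVec_eq_zero (hA : A.IsSymm) (hB : B.IsSymm) {v : ι → ℝ}
    (hAv : A *ᵥ v = 0) (hBv : B *ᵥ v = 0) (hgv : g ⬝ᵥ v ≠ 0) (hfg : (f ⬝ᵥ v) * (g ⬝ᵥ v) ≤ 0)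
    (hbdd : BddBelow (quadFun A f '' {x | quadFun B g x ≤ μ})) :
    ∃ xs ∈ {x | quadFun B g x ≤ μ}, IsMinOn (quadFun A f) {x | quadFun B g x ≤ μ} xs := by
  -- along `v`, `F` and `G` are affine with slopes in the ratio `f ⬝ᵥ v : g ⬝ᵥ v`, so the Lagrangian
  -- with `ν = -(f ⬝ᵥ v) / (g ⬝ᵥ v)` is constant on each line `x + ℝ v`, and that line meets `G = μ`
  have hν : 0 ≤ -((f ⬝ᵥ v) / (g ⬝ᵥ v)) := by
    rw [neg_nonneg, show (f ⬝ᵥ v) / (g ⬝ᵥ v) = (f ⬝ᵥ v) * (g ⬝ᵥ v) / (g ⬝ᵥ v) ^ 2 by field_simp]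
    exact div_nonpos_of_nonpos_of_nonneg hfg (sq_nonneg _)
  refine exists_isMinOn_of_forall_exists_le_lagrangian hA hB hν hbdd fun x =>
    ⟨x + ((quadFun B g x - μ) / (2 * (g ⬝ᵥ v))) • v, le_of_eq ?_, le_of_eq ?_⟩
  · rw [quadFun_add_smul_of_mulVec_eq_zero hB hBv]
    field_simp
    ring
  · rw [quadFun_add_smul_of_mulVec_eq_zero hA hAv]
    field_simp
    ring

theorem exists_isMinOn_quadFun (hA : A.IsSymm) (hB : B.IsSymm)
    (hfeas : {x | quadFun B g x ≤ μ}.Nonempty)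
    (hbdd : BddBelow (quadFun A f '' {x | quadFun B g x ≤ μ})) {σ₁ σ₂ : ℝ} (hne : σ₁ ≠ σ₂)
    (h₁ : (A + σ₁ • B).PosSemidef) (h₂ : (A + σ₂ • B).PosSemidef) :
    ∃ xs ∈ {x | quadFun B g x ≤ μ}, IsMinOn (quadFun A f) {x | quadFun B g x ≤ μ} xs := by
  by_contra hnot
  obtain ⟨v, hv, ⟨β, hdir⟩, β', x, hx, hxmin, hxv⟩ := exists_asymptoticDir_of_not_exists_isMinOn
    (isClosed_le (continuous_quadFun B g) continuous_const) (continuous_quadFun A f) hfeas hbdd hnot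
  have hAv : v ⬝ᵥ A *ᵥ v ≤ 0 := hdir.dotProduct_mulVec_nonpos fun y hy => hy.2
  rcases (hdir.dotProduct_mulVec_nonpos fun y hy => hy.1).lt_or_eq with hBv | hBv
  · exact hnot (exists_isMinOn_of_dotProduct_mulVec_neg hA hB hAv hBv hbdd)
  obtain ⟨hAv, hBv⟩ := mulVec_eq_zero_of_posSemidef_add_smul h₁ h₂ hne hAv hBv
  by_cases hgv : g ⬝ᵥ v = 0
  · refine false_of_isMinOn_dotProduct_self hA hAv hv (fun y hy t => ?_) hbdd hx hxmin hxv
    show quadFun B g _ ≤ μ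
    rwa [quadFun_add_smul_of_mulVec_eq_zero hB hBv, hgv, mul_zero, sub_zero]
  rcases le_or_gt ((f ⬝ᵥ v) * (g ⬝ᵥ v)) 0 with hfg | hfg
  · exact hnot (exists_isMinOn_of_mulVec_eq_zero hA hB hAv hBv hgv hfg hbdd)
  · refine not_bddBelow_of_mulVec_eq_zero hA hAv (x := x) (left_ne_zero_of_mul hfg.ne') ?_ hbdd
    filter_upwards [eventually_ge_atTop 0] with s hs
    show quadFun B g _ ≤ μ
    rw [quadFun_add_smul_of_mulVec_eq_zero hB hBv]
    nlinarith [show quadFun B g x ≤ μ from hx.1, mul_nonneg hs hfg.le]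

end Constrained

/-- under the primal Slater condition, if (QP1QC) is bounded below and
`A + σ₁B ≽ 0`, `A + σ₂B ≽ 0` for some `σ₁ ≠ σ₂`, then the infimum is attained. -/
theorem stmt_13 {n : ℕ} (A B : Matrix (Fin n) (Fin n) ℝ)
    (hA : A.IsSymm) (hB : B.IsSymm) (f g : Fin n → ℝ) (μ : ℝ)
    (slater : ∃ x₀ : Fin n → ℝ, x₀ ⬝ᵥ B *ᵥ x₀ - 2 * (g ⬝ᵥ x₀) < μ)
    (hbdd : ∃ t : ℝ, ∀ x : Fin n → ℝ,
      x ⬝ᵥ B *ᵥ x - 2 * (g ⬝ᵥ x) ≤ μ → t ≤ x ⬝ᵥ A *ᵥ x - 2 * (f ⬝ᵥ x))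
    (σ₁ σ₂ : ℝ) (hne : σ₁ ≠ σ₂)
    (h₁ : (A + σ₁ • B).PosSemidef) (h₂ : (A + σ₂ • B).PosSemidef) :
    ∃ xs : Fin n → ℝ, xs ⬝ᵥ B *ᵥ xs - 2 * (g ⬝ᵥ xs) ≤ μ ∧
      xs ⬝ᵥ A *ᵥ xs - 2 * (f ⬝ᵥ xs) =
        sInf ((fun x : Fin n → ℝ => x ⬝ᵥ A *ᵥ x - 2 * (f ⬝ᵥ x)) ''
          {x : Fin n → ℝ | x ⬝ᵥ B *ᵥ x - 2 * (g ⬝ᵥ x) ≤ μ}) := by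
  obtain ⟨xs, hxs, hmin⟩ := exists_isMinOn_quadFun (f := f) hA hB
    (slater.imp fun _ => le_of_lt) (hbdd.imp fun t ht => by rintro _ ⟨x, hx, rfl⟩; exact ht x hx)
    hne h₁ h₂
  exact ⟨xs, hxs, (IsLeast.csInf_eq ⟨mem_image_of_mem _ hxs, by
    rintro _ ⟨x, hx, rfl⟩; exact isMinOn_iff.1 hmin x hx⟩).symm⟩
end
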